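/- arXiv:2101.04457 — 4 statements merged into one kernel-verified Lean document; each statement's English description precedes it below -/
import Mathlib

section
/- (Diaconis–Freedman) Let μ_N be a symmetric probability measure on (ℝ⁴)^N and let μ̃_N = ∫_{(ℝ⁴)^N} (Emp_Z)^{⊗N} dμ_N(Z), where Emp_Z = N^{-1}Σ_{i=1}^N δ_{z_i} for Z = (z₁,…,z_N). Then for every 1 ≤ n ≤ N the n-th marginals satisfy ‖μ_N^{(n)} − μ̃_N^{(n)}‖_TV ≤ 2n(n−1)/N, where ‖μ‖_TV = sup{|∫φ dμ| : φ continuous bounded, ‖φ‖_∞ ≤ 1}. -/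
noncomputable section
open MeasureTheory Filter Topology Real
open scoped ENNReal

/-- The phase space `ℝ⁴`. -/
abbrev E4 : Type := EuclideanSpace ℝ (Fin 4)

/-- The empirical measure `Emp_Z = N⁻¹ Σ δ_{z_i}` of a configuration `Z ∈ (ℝ⁴)^N`. -/
def emp (N : ℕ) (Z : Fin N → E4) : Measure E4 :=
  (N : ℝ≥0∞)⁻¹ • ∑ i : Fin N, Measure.dirac (Z i)

/-- A measure on `(ℝ⁴)^N` is symmetric when it is invariant under permutation
of the particles. -/
def IsSymmetricMeasure {N : ℕ} (μ : Measure (Fin N → E4)) : Prop :=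
  ∀ σ : Equiv.Perm (Fin N), μ.map (fun Z => Z ∘ σ) = μ

/-- The `n`-th marginal of a measure on `(ℝ⁴)^N`. -/
def marg (N n : ℕ) (ν : Measure (Fin N → E4)) (h : n ≤ N) : Measure (Fin n → E4) :=
  ν.map (fun Z i => Z (Fin.castLE h i))

/-- `∫ (Emp_Z)^{⊗n} dμ_N(Z)`, the `n`-fold Diaconis–Freedman approximation. -/
def dfMeasure (N n : ℕ) (μ : Measure (Fin N → E4)) : Measure (Fin n → E4) :=
  μ.bind fun Z => Measure.pi fun _ : Fin n => emp N Z

end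


noncomputable section
open MeasureTheory Filter Topology Real Function Finset
open scoped ENNReal

lemma exists_perm_comp {α β : Type*} [Fintype α] [Fintype β] [DecidableEq β]
    {f g : α → β} (hf : Injective f) (hg : Injective g) :
    ∃ σ : Equiv.Perm β, ∀ a, σ (f a) = g a := by
  classical
  have hcard : Fintype.card ((Set.range f)ᶜ : Set β) = Fintype.card ((Set.range g)ᶜ : Set β) := by
    rw [Fintype.card_compl_set, Fintype.card_compl_set,
      Set.card_range_of_injective hf, Set.card_range_of_injective hg]
  refine ⟨(Equiv.sumCompl (· ∈ Set.range f)).symm.trans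
    ((((Equiv.ofInjective f hf).symm.trans (Equiv.ofInjective g hg)).sumCongr
      (Fintype.equivOfCardEq hcard)).trans (Equiv.sumCompl (· ∈ Set.range g))), fun a => ?_⟩
  simp only [Equiv.trans_apply]
  rw [Equiv.sumCompl_symm_apply_of_pos (p := (· ∈ Set.range f)) (a := f a) ⟨a, rfl⟩]
  show (Equiv.sumCompl (· ∈ Set.range g))
      (Sum.map (((Equiv.ofInjective f hf).symm.trans (Equiv.ofInjective g hg)))
        (Fintype.equivOfCardEq hcard) (Sum.inl ⟨f a, ⟨a, rfl⟩⟩)) = g a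
  rw [Sum.map_inl, Equiv.sumCompl_apply_inl, Equiv.trans_apply]
  have h2 : (Equiv.ofInjective f hf).symm ⟨f a, ⟨a, rfl⟩⟩ = a := Equiv.ofInjective_symm_apply hf a
  rw [h2]
  rfl

lemma prod_lower (N : ℕ) : ∀ n : ℕ, n ≤ N →
    (N:ℝ)^n - ∏ k ∈ Finset.range n, ((N:ℝ) - k) ≤ (∑ k ∈ Finset.range n, (k:ℝ)) * (N:ℝ)^(n-1)
  | 0, _ => by simp
  | (n+1), h => by
    have hn : n ≤ N := Nat.le_of_succ_le h
    have hNn : ∀ k ∈ Finset.range n, (0:ℝ) ≤ (N:ℝ) - k ∧ (N:ℝ) - k ≤ N := by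
      intro k hk
      have : k < n := Finset.mem_range.mp hk
      constructor
      · have : (k:ℝ) ≤ N := by exact_mod_cast le_of_lt (lt_of_lt_of_le this hn)
        linarith
      · have : (0:ℝ) ≤ k := by positivity
        linarith
    have hP0 : (0:ℝ) ≤ ∏ k ∈ Finset.range n, ((N:ℝ) - k) :=
      Finset.prod_nonneg fun k hk => (hNn k hk).1
    have hPN : ∏ k ∈ Finset.range n, ((N:ℝ) - k) ≤ (N:ℝ)^n := by
      calc ∏ k ∈ Finset.range n, ((N:ℝ) - k) ≤ ∏ _k ∈ Finset.range n, (N:ℝ) :=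
            Finset.prod_le_prod (fun k hk => (hNn k hk).1) (fun k hk => (hNn k hk).2)
        _ = (N:ℝ)^n := by rw [Finset.prod_const, Finset.card_range]
    rcases Nat.eq_zero_or_pos n with rfl | hn1
    · simp
    have ih := prod_lower N n hn
    have hNpos : (0:ℝ) ≤ N := by positivity
    have hpow : (N:ℝ) * (N:ℝ)^(n-1) = (N:ℝ)^n := by
      rw [← pow_succ']
      congr 1
      omega
    rw [Finset.prod_range_succ, Finset.sum_range_succ, pow_succ]
    have key : (N:ℝ)^n * N - (∏ k ∈ Finset.range n, ((N:ℝ) - k)) * ((N:ℝ) - n)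
        = (N:ℝ) * ((N:ℝ)^n - ∏ k ∈ Finset.range n, ((N:ℝ) - k))
          + (n:ℝ) * ∏ k ∈ Finset.range n, ((N:ℝ) - k) := by ring
    rw [key]
    have h2 : (N:ℝ) * ((N:ℝ)^n - ∏ k ∈ Finset.range n, ((N:ℝ) - k))
        ≤ (N:ℝ) * ((∑ k ∈ Finset.range n, (k:ℝ)) * (N:ℝ)^(n-1)) :=
      mul_le_mul_of_nonneg_left ih hNpos
    have h3 : (n:ℝ) * ∏ k ∈ Finset.range n, ((N:ℝ) - k) ≤ (n:ℝ) * (N:ℝ)^n :=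
      mul_le_mul_of_nonneg_left hPN (by positivity)
    have h4 : (N:ℝ) * ((∑ k ∈ Finset.range n, (k:ℝ)) * (N:ℝ)^(n-1))
        = (∑ k ∈ Finset.range n, (k:ℝ)) * (N:ℝ)^n := by
      rw [← hpow]; ring
    have : n + 1 - 1 = n := rfl
    rw [this]
    calc (N:ℝ) * ((N:ℝ)^n - ∏ k ∈ Finset.range n, ((N:ℝ) - k))
          + (n:ℝ) * ∏ k ∈ Finset.range n, ((N:ℝ) - k)
        ≤ (∑ k ∈ Finset.range n, (k:ℝ)) * (N:ℝ)^n + (n:ℝ) * (N:ℝ)^n := by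
          rw [← h4]; exact add_le_add h2 h3
      _ = (∑ k ∈ Finset.range n, (k:ℝ) + (n:ℝ)) * (N:ℝ)^n := by ring

lemma emp_apply {N : ℕ} (Z : Fin N → E4) {s : Set E4} (hs : MeasurableSet s) :
    emp N Z s = (N : ℝ≥0∞)⁻¹ * ∑ j : Fin N, s.indicator 1 (Z j) := by
  rw [emp, Measure.smul_apply, Measure.finset_sum_apply, smul_eq_mul]
  congr 1
  exact Finset.sum_congr rfl fun j _ => Measure.dirac_apply' _ hs

lemma emp_prob {N : ℕ} (hN : 1 ≤ N) (Z : Fin N → E4) : IsProbabilityMeasure (emp N Z) := by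
  constructor
  rw [emp_apply Z MeasurableSet.univ]
  simp only [Set.indicator_univ, Pi.one_apply, Finset.sum_const, Finset.card_univ,
    Fintype.card_fin, nsmul_eq_mul, mul_one]
  exact ENNReal.inv_mul_cancel (by exact_mod_cast (by omega : N ≠ 0)) (by simp)

lemma indicator_pi {m : ℕ} (s : Fin m → Set E4) (w : Fin m → E4) :
    (Set.univ.pi s).indicator (1 : (Fin m → E4) → ℝ≥0∞) w
      = ∏ i : Fin m, (s i).indicator 1 (w i) := by
  by_cases h : w ∈ Set.univ.pi s
  · rw [Set.indicator_of_mem h]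
    rw [Set.mem_univ_pi] at h
    simp only [Pi.one_apply]
    exact (Finset.prod_eq_one fun i _ => by rw [Set.indicator_of_mem (h i)]; rfl).symm
  · rw [Set.indicator_of_notMem h]
    rw [Set.mem_univ_pi] at h
    push_neg at h
    obtain ⟨i, hi⟩ := h
    exact (Finset.prod_eq_zero (Finset.mem_univ i) (by rw [Set.indicator_of_notMem hi])).symm

lemma pi_emp {N : ℕ} (hN : 1 ≤ N) (m : ℕ) (Z : Fin N → E4) :
    Measure.pi (fun _ : Fin m => emp N Z)
      = ((N : ℝ≥0∞) ^ m)⁻¹ • ∑ f : Fin m → Fin N, Measure.dirac (fun i => Z (f i)) := by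
  haveI := emp_prob hN Z
  refine Measure.pi_eq fun s hs => ?_
  rw [Measure.smul_apply, Measure.finset_sum_apply, smul_eq_mul]
  have : ∀ f : Fin m → Fin N,
      Measure.dirac (α := Fin m → E4) (fun i => Z (f i)) (Set.univ.pi s)
        = ∏ i : Fin m, (s i).indicator 1 (Z (f i)) := by
    intro f
    rw [Measure.dirac_apply' _ (MeasurableSet.univ_pi hs), indicator_pi]
  simp_rw [this]
  rw [← Fintype.prod_sum (fun (i : Fin m) (j : Fin N) => (s i).indicator 1 (Z j))]
  have : ∀ i : Fin m, emp N Z (s i) = (N : ℝ≥0∞)⁻¹ * ∑ j : Fin N, (s i).indicator 1 (Z j) :=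
    fun i => emp_apply Z (hs i)
  simp_rw [this]
  rw [Finset.prod_mul_distrib, Finset.prod_const, Finset.card_univ, Fintype.card_fin,
    ← ENNReal.inv_pow]

lemma measurable_proj_f {N m : ℕ} (f : Fin m → Fin N) :
    Measurable (fun Z : Fin N → E4 => fun i : Fin m => Z (f i)) :=
  measurable_pi_lambda _ fun i => measurable_pi_apply _

lemma measurable_kernel {N : ℕ} (hN : 1 ≤ N) (m : ℕ) :
    Measurable fun Z : Fin N → E4 => Measure.pi fun _ : Fin m => emp N Z := by
  apply Measure.measurable_of_measurable_coe
  intro s hs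
  simp_rw [pi_emp hN m, Measure.smul_apply, Measure.finset_sum_apply,
    Measure.dirac_apply' _ hs, smul_eq_mul]
  apply Measurable.const_mul
  apply Finset.measurable_sum
  intro f _
  exact ((measurable_one.indicator hs)).comp (measurable_proj_f f)

lemma dfMeasure_eq {N : ℕ} (hN : 1 ≤ N) (m : ℕ) (μ : Measure (Fin N → E4)) :
    dfMeasure N m μ
      = ((N : ℝ≥0∞) ^ m)⁻¹ • ∑ f : Fin m → Fin N, μ.map (fun Z i => Z (f i)) := by
  ext s hs
  rw [dfMeasure, Measure.bind_apply hs (measurable_kernel hN m).aemeasurable]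
  simp_rw [pi_emp hN m, Measure.smul_apply, Measure.finset_sum_apply,
    Measure.dirac_apply' _ hs, smul_eq_mul]
  rw [lintegral_const_mul _ (Finset.measurable_sum _ fun f _ =>
    ((measurable_one.indicator hs)).comp' (measurable_proj_f f)),
    lintegral_finset_sum _ fun f _ => ((measurable_one.indicator hs)).comp' (measurable_proj_f f)]
  congr 1
  refine Finset.sum_congr rfl fun f _ => ?_
  have hind : (fun Z : Fin N → E4 => s.indicator (1 : (Fin m → E4) → ℝ≥0∞) (fun i => Z (f i)))
      = ((fun Z : Fin N → E4 => fun i => Z (f i)) ⁻¹' s).indicator 1 := by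
    classical
    ext Z
    rw [Set.indicator_apply, Set.indicator_apply, Set.mem_preimage]
    rfl
  rw [hind, lintegral_indicator_one (hs.preimage (measurable_proj_f f)),
    Measure.map_apply (measurable_proj_f f) hs]

lemma pi_map_proj {n N : ℕ} (h : n ≤ N) (ν : Measure E4) [IsProbabilityMeasure ν] :
    (Measure.pi fun _ : Fin N => ν).map (fun Z (i : Fin n) => Z (Fin.castLE h i))
      = Measure.pi fun _ : Fin n => ν := by
  refine (Measure.pi_eq fun s hs => ?_).symm
  classical
  set t : Fin N → Set E4 := fun j => if hj : (j : ℕ) < n then s ⟨j, hj⟩ else Set.univ with ht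
  have htm : ∀ j, MeasurableSet (t j) := by
    intro j
    rw [ht]
    by_cases hj : (j : ℕ) < n
    · simp only [hj, dif_pos]; exact hs _
    · simp only [hj, dif_neg, not_false_iff]; exact MeasurableSet.univ
  rw [Measure.map_apply (measurable_proj_f _) (MeasurableSet.univ_pi hs)]
  have hpre : (fun Z : Fin N → E4 => fun i : Fin n => Z (Fin.castLE h i)) ⁻¹' (Set.univ.pi s)
      = Set.univ.pi t := by
    ext Z
    simp only [Set.mem_preimage, Set.mem_univ_pi]
    constructor
    · intro hZ j
      rw [ht]
      by_cases hj : (j : ℕ) < n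
      · simp only [hj, dif_pos]
        have h3 : Fin.castLE h ⟨(j : ℕ), hj⟩ = j := by ext; simp
        have h2 := hZ ⟨(j : ℕ), hj⟩
        rwa [h3] at h2
      · simp [hj]
    · intro hZ i
      have := hZ (Fin.castLE h i)
      have hlt : ((Fin.castLE h i : Fin N) : ℕ) < n := i.isLt
      rw [ht] at this
      simp only [hlt, dif_pos] at this
      have heq : (⟨((Fin.castLE h i : Fin N) : ℕ), hlt⟩ : Fin n) = i := by ext; simp
      rwa [heq] at this
  rw [hpre, Measure.pi_pi]
  -- ∏ j : Fin N, ν (t j) = ∏ i : Fin n, ν (s i)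
  have hF : ∀ j : Fin N, ν (t j)
      = (fun k : ℕ => if hk : k < n then ν (s ⟨k, hk⟩) else 1) (j : ℕ) := by
    intro j
    rw [ht]
    by_cases hj : (j : ℕ) < n
    · simp [hj]
    · simp [hj]
  calc ∏ j : Fin N, ν (t j)
      = ∏ j : Fin N, (fun k : ℕ => if hk : k < n then ν (s ⟨k, hk⟩) else 1) (j : ℕ) :=
        Finset.prod_congr rfl fun j _ => hF j
    _ = ∏ k ∈ Finset.range N, (fun k : ℕ => if hk : k < n then ν (s ⟨k, hk⟩) else 1) k :=
        Fin.prod_univ_eq_prod_range (fun k : ℕ => if hk : k < n then ν (s ⟨k, hk⟩) else 1) N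
    _ = ∏ k ∈ Finset.range n, (fun k : ℕ => if hk : k < n then ν (s ⟨k, hk⟩) else 1) k := by
        refine (Finset.prod_subset (Finset.range_subset_range.mpr h) ?_).symm
        intro k _ hk
        have : ¬ k < n := by simpa using hk
        simp [this]
    _ = ∏ i : Fin n, (fun k : ℕ => if hk : k < n then ν (s ⟨k, hk⟩) else 1) (i : ℕ) :=
        (Fin.prod_univ_eq_prod_range (fun k : ℕ => if hk : k < n then ν (s ⟨k, hk⟩) else 1) n).symm
    _ = ∏ i : Fin n, ν (s i) := by
        refine Finset.prod_congr rfl fun i _ => ?_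
        simp only [i.isLt, dif_pos, Fin.eta]

lemma marg_df {N n : ℕ} (hN : 1 ≤ N) (hnN : n ≤ N) (μ : Measure (Fin N → E4)) :
    marg N n (dfMeasure N N μ) hnN = dfMeasure N n μ := by
  ext s hs
  rw [marg, Measure.map_apply (measurable_proj_f _) hs, dfMeasure, dfMeasure,
    Measure.bind_apply (hs.preimage (measurable_proj_f _)) (measurable_kernel hN N).aemeasurable,
    Measure.bind_apply hs (measurable_kernel hN n).aemeasurable]
  refine lintegral_congr fun Z => ?_
  haveI := emp_prob hN Z
  rw [← Measure.map_apply (measurable_proj_f _) hs, pi_map_proj hnN (emp N Z)]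

end

noncomputable section
open MeasureTheory Filter Topology Real
open scoped ENNReal

set_option maxHeartbeats 1000000 in
/-- **Diaconis–Freedman.** -/
theorem diaconis_freedman (N : ℕ) (hN : 1 ≤ N)
    (μ : Measure (Fin N → E4)) [IsProbabilityMeasure μ]
    (hsymm : IsSymmetricMeasure μ) :
    ∀ (n : ℕ) (hn1 : 1 ≤ n) (hnN : n ≤ N),
      ∀ φ : (Fin n → E4) → ℝ, Continuous φ → (∀ x, |φ x| ≤ 1) →
        |(∫ x, φ x ∂(marg N n μ hnN)) - ∫ x, φ x ∂(marg N n (dfMeasure N N μ) hnN)|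
          ≤ 2 * n * (n - 1) / N := by
  intro n hn1 hnN φ hφc hφb
  classical
  have hnorm : ∀ x, ‖φ x‖ ≤ 1 := fun x => by rw [Real.norm_eq_abs]; exact hφb x
  set J : (Fin n → Fin N) → ℝ := fun f => ∫ Z, φ (fun i => Z (f i)) ∂μ with hJ
  have hNpos : (0:ℝ) < N := by exact_mod_cast hN
  have hNn : (0:ℝ) < (N:ℝ)^n := by positivity
  -- first marginal integral
  have hI1 : ∫ x, φ x ∂(marg N n μ hnN) = J (Fin.castLE hnN) := by
    rw [marg, integral_map (measurable_proj_f _).aemeasurable hφc.aestronglyMeasurable]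
  -- integrability
  have hint : ∀ f : Fin n → Fin N, Integrable φ (μ.map (fun Z i => Z (f i))) := by
    intro f
    haveI : IsProbabilityMeasure (μ.map (fun Z i => Z (f i))) :=
      Measure.isProbabilityMeasure_map (measurable_proj_f f).aemeasurable
    exact (integrable_const (1:ℝ)).mono' hφc.aestronglyMeasurable (ae_of_all _ hnorm)
  -- second marginal integral
  have hI2 : ∫ x, φ x ∂(marg N n (dfMeasure N N μ) hnN)
      = ((N:ℝ)^n)⁻¹ * ∑ f : Fin n → Fin N, J f := by
    rw [marg_df hN hnN μ, dfMeasure_eq hN n μ, integral_smul_measure, smul_eq_mul]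
    congr 1
    · rw [ENNReal.toReal_inv, ENNReal.toReal_pow]
      norm_num
    · rw [integral_finset_sum_measure (fun f _ => hint f)]
      exact Finset.sum_congr rfl fun f _ =>
        integral_map (measurable_proj_f f).aemeasurable hφc.aestronglyMeasurable
  -- symmetry: injective tuples give the same integral
  have hcont : Continuous fun W : Fin N → E4 => φ (fun i => W (Fin.castLE hnN i)) :=
    hφc.comp (continuous_pi fun i => continuous_apply _)
  have hJinj : ∀ f : Fin n → Fin N, Function.Injective f → J f = J (Fin.castLE hnN) := by
    intro f hf
    obtain ⟨σ, hσ⟩ := exists_perm_comp (Fin.castLE_injective hnN) hf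
    have h1 : J f = ∫ Z, φ (fun i => (Z ∘ ⇑σ) (Fin.castLE hnN i)) ∂μ := by
      rw [hJ]
      refine integral_congr_ae (ae_of_all _ fun Z => ?_)
      show φ (fun i => Z (f i)) = φ (fun i => (Z ∘ ⇑σ) (Fin.castLE hnN i))
      have harg : (fun i => Z (f i)) = fun i => (Z ∘ ⇑σ) (Fin.castLE hnN i) := by
        funext i
        rw [Function.comp_apply, hσ i]
      rw [harg]
    rw [h1]
    have h2 : ∫ W, φ (fun i => W (Fin.castLE hnN i)) ∂(μ.map (fun Z => Z ∘ ⇑σ))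
        = ∫ Z, φ (fun i => (Z ∘ ⇑σ) (Fin.castLE hnN i)) ∂μ :=
      integral_map (measurable_pi_lambda _ fun i => (measurable_pi_apply _)).aemeasurable
        hcont.aestronglyMeasurable
    rw [← h2, hsymm σ]
  -- bound on each J
  have hJb : ∀ f : Fin n → Fin N, |J f| ≤ 1 := by
    intro f
    have h := norm_integral_le_of_norm_le_const (μ := μ)
      (f := fun Z : Fin N → E4 => φ (fun i => Z (f i))) (C := 1)
      (ae_of_all _ fun Z => hnorm _)
    rwa [probReal_univ, mul_one, Real.norm_eq_abs] at h
  -- cardinalities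
  have hcardfun : Fintype.card (Fin n → Fin N) = N ^ n := by
    rw [Fintype.card_fun]; simp
  have hcardinj : (Finset.univ.filter fun f : Fin n → Fin N => Function.Injective f).card
      = N.descFactorial n := by
    rw [← Fintype.card_subtype,
      Fintype.card_congr (Equiv.subtypeInjectiveEquivEmbedding (Fin n) (Fin N)),
      Fintype.card_embedding_eq, Fintype.card_fin, Fintype.card_fin]
  have hcardnoninj : (Finset.univ.filter fun f : Fin n → Fin N => ¬ Function.Injective f).card
      = N ^ n - N.descFactorial n := by
    have h := Finset.card_filter_add_card_filter_not
      (s := (Finset.univ : Finset (Fin n → Fin N)))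
      (p := fun f => Function.Injective f)
    rw [hcardinj, Finset.card_univ, hcardfun] at h
    omega
  -- rewrite difference
  rw [hI1, hI2]
  have key : J (Fin.castLE hnN) - ((N:ℝ)^n)⁻¹ * ∑ f : Fin n → Fin N, J f
      = ((N:ℝ)^n)⁻¹ * ∑ f : Fin n → Fin N, (J (Fin.castLE hnN) - J f) := by
    rw [Finset.sum_sub_distrib, Finset.sum_const, Finset.card_univ, hcardfun, nsmul_eq_mul,
      mul_sub, ← mul_assoc]
    have hc : ((N:ℝ)^n)⁻¹ * ((N^n : ℕ):ℝ) = 1 := by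
      push_cast
      exact inv_mul_cancel₀ (ne_of_gt hNn)
    rw [hc, one_mul]
  rw [key]
  have hsplit : ∑ f : Fin n → Fin N, (J (Fin.castLE hnN) - J f)
      = ∑ f ∈ Finset.univ.filter (fun f : Fin n → Fin N => ¬ Function.Injective f),
          (J (Fin.castLE hnN) - J f) := by
    refine (Finset.sum_filter_of_ne ?_).symm
    intro f _ hne hinj
    exact hne (by rw [hJinj f hinj, sub_self])
  rw [hsplit, abs_mul, abs_of_nonneg (le_of_lt (inv_pos.mpr hNn))]
  have habs : |∑ f ∈ Finset.univ.filter (fun f : Fin n → Fin N => ¬ Function.Injective f),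
      (J (Fin.castLE hnN) - J f)|
      ≤ ((N ^ n - N.descFactorial n : ℕ) : ℝ) * 2 := by
    calc |∑ f ∈ Finset.univ.filter (fun f : Fin n → Fin N => ¬ Function.Injective f),
        (J (Fin.castLE hnN) - J f)|
        ≤ ∑ f ∈ Finset.univ.filter (fun f : Fin n → Fin N => ¬ Function.Injective f),
            |J (Fin.castLE hnN) - J f| := Finset.abs_sum_le_sum_abs _ _
      _ ≤ ∑ _f ∈ Finset.univ.filter (fun f : Fin n → Fin N => ¬ Function.Injective f), 2 := by
          refine Finset.sum_le_sum fun f _ => ?_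
          calc |J (Fin.castLE hnN) - J f| ≤ |J (Fin.castLE hnN)| + |J f| := abs_sub _ _
            _ ≤ 1 + 1 := add_le_add (hJb _) (hJb _)
            _ = 2 := by norm_num
      _ = ((N ^ n - N.descFactorial n : ℕ) : ℝ) * 2 := by
          rw [Finset.sum_const, hcardnoninj, nsmul_eq_mul]
  -- the counting estimate
  have hdesc : ((N.descFactorial n : ℕ) : ℝ) = ∏ k ∈ Finset.range n, ((N:ℝ) - k) := by
    rw [Nat.descFactorial_eq_prod_range, Nat.cast_prod]
    refine Finset.prod_congr rfl fun k hk => ?_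
    have : k ≤ N := le_of_lt (lt_of_lt_of_le (Finset.mem_range.mp hk) hnN)
    push_cast [Nat.cast_sub this]
    ring
  have hcount : ((N ^ n - N.descFactorial n : ℕ) : ℝ)
      ≤ ((n:ℝ) * ((n:ℝ) - 1) / 2) * (N:ℝ)^(n-1) := by
    have hle : N.descFactorial n ≤ N ^ n := Nat.descFactorial_le_pow N n
    rw [Nat.cast_sub hle, hdesc]
    push_cast
    have hsum : ∑ k ∈ Finset.range n, (k:ℝ) = (n:ℝ) * ((n:ℝ) - 1) / 2 := by
      have h2 := Finset.sum_range_id_mul_two n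
      have h2' : ((∑ i ∈ Finset.range n, i : ℕ) : ℝ) * 2 = (n:ℝ) * ((n:ℝ) - 1) := by
        rw [← Nat.cast_ofNat, ← Nat.cast_mul, h2]
        push_cast [Nat.cast_sub hn1]
        ring
      rw [Nat.cast_sum] at h2'
      linarith
    have := prod_lower N n hnN
    rw [hsum] at this
    exact this
  have hstep : ((N:ℝ)^n)⁻¹ * |∑ f ∈ Finset.univ.filter
        (fun f : Fin n → Fin N => ¬ Function.Injective f), (J (Fin.castLE hnN) - J f)|
      ≤ ((N:ℝ)^n)⁻¹ * ((((n:ℝ) * ((n:ℝ) - 1) / 2) * (N:ℝ)^(n-1)) * 2) := by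
    refine mul_le_mul_of_nonneg_left ?_ (le_of_lt (inv_pos.mpr hNn))
    exact habs.trans (mul_le_mul_of_nonneg_right hcount (by norm_num))
  refine hstep.trans ?_
  -- final arithmetic
  have hpow : (N:ℝ)^n = (N:ℝ)^(n-1) * N := by
    rw [← pow_succ]
    congr 1
    omega
  rw [hpow]
  have hA : (0:ℝ) ≤ (n:ℝ) * ((n:ℝ) - 1) := by
    have : (1:ℝ) ≤ n := by exact_mod_cast hn1
    nlinarith
  have hNn1 : (0:ℝ) < (N:ℝ)^(n-1) := by positivity
  rw [mul_inv, div_eq_mul_inv, div_eq_mul_inv]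
  calc ((N:ℝ)^(n-1))⁻¹ * (N:ℝ)⁻¹ * ((((n:ℝ) * ((n:ℝ) - 1) / 2) * (N:ℝ)^(n-1)) * 2)
      = ((n:ℝ) * ((n:ℝ) - 1)) * (N:ℝ)⁻¹ := by
        field_simp
    _ ≤ (2 * (n:ℝ) * ((n:ℝ) - 1)) * (N:ℝ)⁻¹ := by
        refine mul_le_mul_of_nonneg_right ?_ (le_of_lt (inv_pos.mpr hNpos))
        nlinarith
    _ = 2 * (n:ℝ) * ((n:ℝ) - 1) * (N:ℝ)⁻¹ := by ring

end
end

section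
/- Let μ_N be a symmetric probability measure on (ℝ⁴)^N whose marginals have densities bounded as μ_N^{(k)} ≤ ((2πħ)^{2k}·N(N−1)…(N−k+1))^{-1} (as densities with respect to Lebesgue measure), and let μ̃_N^{(n)} = ∫_{(ℝ⁴)^N} (Emp_Z)^{⊗n} dμ_N(Z) be the n-th marginal of its Diaconis–Freedman approximation. Then for every Borel set Ω ⊂ ℝ⁴ and every 1 ≤ n ≤ N: ∫_{Ω^n} dμ̃_N^{(n)} ≤ N^{-n} Σ_{k=1}^n |Ω|^k S(n,k) / (2πħ)^{2k}, where |Ω| is the Lebesgue measure of Ω and S(n,k) is the Stirling number of the second kind, i.e. the number of partitions of an n-element set into k nonempty blocks. -/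
noncomputable section
open MeasureTheory Filter Topology Real
open scoped ENNReal

/-- Stirling number of the second kind: the number of partitions of an `n`-element set
into `k` nonempty blocks, i.e. the number of surjections `Fin n ↠ Fin k` divided by `k!`. -/
def stirling2 (n k : ℕ) : ℕ :=
  Nat.card {f : Fin n → Fin k // Function.Surjective f} / k.factorial


section DFCombSec
open Finset Function
namespace DFComb

variable {n N M k : ℕ}

/-- First occurrence of the value `φ i`. -/
def fo (φ : Fin n → Fin N) (i : Fin n) : Fin n :=
  (Finset.univ.filter fun t => φ t = φ i).min' ⟨i, by simp⟩

lemma fo_apply (φ : Fin n → Fin N) (i : Fin n) : φ (fo φ i) = φ i := by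
  have h := Finset.min'_mem (Finset.univ.filter fun t => φ t = φ i) ⟨i, by simp⟩
  simpa [fo] using h

lemma fo_le (φ : Fin n → Fin N) {i t : Fin n} (h : φ t = φ i) : fo φ i ≤ t :=
  Finset.min'_le _ _ (by simp [h])

lemma fo_congr (φ : Fin n → Fin N) {i j : Fin n} (h : φ i = φ j) : fo φ i = fo φ j := by
  unfold fo
  congr 1
  ext t
  simp [h]

lemma fo_inj (φ : Fin n → Fin N) {i j : Fin n} (h : fo φ i = fo φ j) : φ i = φ j := by
  rw [← fo_apply φ i, h, fo_apply φ j]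

/-- The rank (number of earlier distinct values) of the value `φ i`. -/
def sdef (φ : Fin n → Fin N) (i : Fin n) : ℕ :=
  ((Finset.Iio (fo φ i)).image φ).card

lemma not_mem_image_Iio_fo (φ : Fin n → Fin N) (i : Fin n) :
    φ i ∉ (Finset.Iio (fo φ i)).image φ := by
  intro h
  obtain ⟨t, ht, hφt⟩ := Finset.mem_image.mp h
  exact absurd (fo_le φ hφt) (not_le.mpr (Finset.mem_Iio.mp ht))

lemma sdef_lt (φ : Fin n → Fin N) (i : Fin n) :
    sdef φ i < (Finset.univ.image φ).card := by
  apply Finset.card_lt_card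
  constructor
  · exact Finset.image_subset_image (Finset.subset_univ _)
  · intro hsub
    exact not_mem_image_Iio_fo φ i (hsub (Finset.mem_image_of_mem φ (Finset.mem_univ i)))

lemma sdef_strict (φ : Fin n → Fin N) {i j : Fin n} (h : fo φ i < fo φ j) :
    sdef φ i < sdef φ j := by
  have hsub : insert (φ i) ((Finset.Iio (fo φ i)).image φ) ⊆ (Finset.Iio (fo φ j)).image φ := by
    intro x hx
    rcases Finset.mem_insert.mp hx with rfl | hx
    · exact Finset.mem_image.mpr ⟨fo φ i, Finset.mem_Iio.mpr h, fo_apply φ i⟩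
    · exact Finset.image_subset_image (Finset.Iio_subset_Iio h.le) hx
  have := Finset.card_le_card hsub
  rw [Finset.card_insert_of_notMem (not_mem_image_Iio_fo φ i)] at this
  unfold sdef
  omega

lemma sdef_eq_iff (φ : Fin n → Fin N) {i j : Fin n} :
    sdef φ i = sdef φ j ↔ φ i = φ j := by
  constructor
  · intro h
    rcases lt_trichotomy (fo φ i) (fo φ j) with hlt | heq | hgt
    · exact absurd h (sdef_strict φ hlt).ne
    · exact fo_inj φ heq
    · exact absurd h.symm (sdef_strict φ hgt).ne
  · intro h
    unfold sdef
    rw [fo_congr φ h]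

/-- Two functions with the same fibers have images of equal cardinality. -/
lemma card_image_eq_of_fibers {α β γ : Type*} [DecidableEq β] [DecidableEq γ]
    {φ : α → β} {ψ : α → γ} (s : Finset α)
    (h : ∀ i j, φ i = φ j ↔ ψ i = ψ j) : (s.image φ).card = (s.image ψ).card := by
  apply Finset.card_bij (fun a ha => ψ (Finset.mem_image.mp ha).choose)
  · intro a ha
    exact Finset.mem_image_of_mem ψ (Finset.mem_image.mp ha).choose_spec.1
  · intro a ha b hb hab
    have h1 := (Finset.mem_image.mp ha).choose_spec.2
    have h2 := (Finset.mem_image.mp hb).choose_spec.2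
    rw [← h1, ← h2]
    exact (h _ _).mpr hab
  · intro b hb
    obtain ⟨j, hj, rfl⟩ := Finset.mem_image.mp hb
    refine ⟨φ j, Finset.mem_image_of_mem φ hj, ?_⟩
    exact (h _ _).mp (Finset.mem_image.mp (Finset.mem_image_of_mem φ hj)).choose_spec.2

lemma sdef_congr {φ : Fin n → Fin N} {ψ : Fin n → Fin M}
    (h : ∀ i j, φ i = φ j ↔ ψ i = ψ j) : sdef φ = sdef ψ := by
  have hfo : fo φ = fo ψ := by
    funext i
    unfold fo
    congr 1
    ext t
    simp [h t i]
  funext i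
  unfold sdef
  rw [hfo]
  exact card_image_eq_of_fibers _ h

variable (φ : Fin n → Fin N) (hk : (Finset.univ.image φ).card = k)

/-- The canonical surjection associated to `φ`. -/
def sOf : Fin n → Fin k := fun i => ⟨sdef φ i, hk ▸ sdef_lt φ i⟩

lemma sOf_eq_iff {i j : Fin n} : sOf φ hk i = sOf φ hk j ↔ φ i = φ j := by
  rw [← sdef_eq_iff φ]
  exact ⟨fun h => congrArg Fin.val h, fun h => Fin.ext h⟩

lemma sOf_surj : Surjective (sOf φ hk) := by
  have hcard : (Finset.univ.image (sOf φ hk)).card = k := by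
    rw [← card_image_eq_of_fibers Finset.univ (fun i j => (sOf_eq_iff φ hk).symm), hk]
  have huniv : Finset.univ.image (sOf φ hk) = Finset.univ :=
    Finset.eq_univ_of_card _ (by simp [hcard])
  intro y
  have : y ∈ Finset.univ.image (sOf φ hk) := huniv ▸ Finset.mem_univ y
  obtain ⟨i, _, hi⟩ := Finset.mem_image.mp this
  exact ⟨i, hi⟩

/-- The canonical injection associated to `φ`. -/
def psiOf : Fin k → Fin N := φ ∘ surjInv (sOf_surj φ hk)

lemma psiOf_comp_sOf : psiOf φ hk ∘ sOf φ hk = φ := by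
  funext i
  show φ (surjInv (sOf_surj φ hk) (sOf φ hk i)) = φ i
  exact (sOf_eq_iff φ hk).mp (surjInv_eq (sOf_surj φ hk) (sOf φ hk i))

lemma psiOf_inj : Injective (psiOf φ hk) := by
  intro a b hab
  have : sOf φ hk (surjInv (sOf_surj φ hk) a) = sOf φ hk (surjInv (sOf_surj φ hk) b) :=
    (sOf_eq_iff φ hk).mpr hab
  rwa [surjInv_eq (sOf_surj φ hk) a, surjInv_eq (sOf_surj φ hk) b] at this

variable {k : ℕ}

/-- The decomposition map `(φ, σ) ↦ (σ ∘ s_φ, ψ_φ ∘ σ⁻¹)`. -/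
def Fmap (n N k : ℕ) :
    {φ : Fin n → Fin N // (Finset.univ.image φ).card = k} × Equiv.Perm (Fin k) →
      {f : Fin n → Fin k // Surjective f} × (Fin k ↪ Fin N) :=
  fun p => (⟨p.2 ∘ sOf p.1.1 p.1.2, p.2.surjective.comp (sOf_surj _ _)⟩,
    ⟨psiOf p.1.1 p.1.2 ∘ p.2.symm, (psiOf_inj _ _).comp p.2.symm.injective⟩)

lemma Fmap_bij : Bijective (Fmap n N k) := by
  constructor
  · rintro ⟨⟨φ, hφ⟩, σ⟩ ⟨⟨φ', hφ'⟩, σ'⟩ h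
    have h1 : ∀ i, σ (sOf φ hφ i) = σ' (sOf φ' hφ' i) := fun i =>
      congrFun (congrArg Subtype.val (congrArg Prod.fst h)) i
    have h2 : ∀ y, psiOf φ hφ (σ.symm y) = psiOf φ' hφ' (σ'.symm y) := fun y =>
      DFunLike.congr_fun (congrArg Prod.snd h) y
    have hφφ' : φ = φ' := by
      funext i
      have h3 := h2 (σ (sOf φ hφ i))
      rw [Equiv.symm_apply_apply] at h3
      rw [h1 i, Equiv.symm_apply_apply] at h3
      calc φ i = psiOf φ hφ (sOf φ hφ i) := (congrFun (psiOf_comp_sOf φ hφ) i).symm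
        _ = psiOf φ' hφ' (sOf φ' hφ' i) := h3
        _ = φ' i := congrFun (psiOf_comp_sOf φ' hφ') i
    subst hφφ'
    have hσ : σ = σ' := by
      apply Equiv.ext
      intro y
      obtain ⟨i, rfl⟩ := sOf_surj φ hφ y
      exact h1 i
    rw [hσ]
  · rintro ⟨⟨t, ht⟩, χ⟩
    set φ : Fin n → Fin N := χ ∘ t with hφdef
    have hφ : (Finset.univ.image φ).card = k := by
      have himg : Finset.univ.image φ = (Finset.univ.image t).image χ :=
        (Finset.image_image).symm
      rw [himg, Finset.image_univ_of_surjective ht,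
        Finset.card_image_of_injective _ χ.injective, Finset.card_univ, Fintype.card_fin]
    have hfib : ∀ i j : Fin n, φ i = φ j ↔ t i = t j := fun i j =>
      ⟨fun h => χ.injective h, fun h => congrArg χ h⟩
    have hcomp : ∀ i, t (surjInv (sOf_surj φ hφ) (sOf φ hφ i)) = t i := fun i =>
      (hfib _ _).mp ((sOf_eq_iff φ hφ).mp (surjInv_eq (sOf_surj φ hφ) (sOf φ hφ i)))
    have hσ₀surj : Surjective (t ∘ surjInv (sOf_surj φ hφ)) := by
      have hc : (t ∘ surjInv (sOf_surj φ hφ)) ∘ sOf φ hφ = t := funext hcomp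
      have h' : Surjective ((t ∘ surjInv (sOf_surj φ hφ)) ∘ sOf φ hφ) := by
        rw [hc]; exact ht
      exact h'.of_comp
    have hσ₀bij : Bijective (t ∘ surjInv (sOf_surj φ hφ)) :=
      ⟨Finite.injective_iff_surjective.mpr hσ₀surj, hσ₀surj⟩
    refine ⟨(⟨φ, hφ⟩, Equiv.ofBijective _ hσ₀bij), ?_⟩
    have hkey : ∀ y, χ ((t ∘ surjInv (sOf_surj φ hφ)) y) = psiOf φ hφ y := fun y => rfl
    apply Prod.ext
    · apply Subtype.ext
      funext i
      exact hcomp i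
    · apply Function.Embedding.ext
      intro y
      show psiOf φ hφ ((Equiv.ofBijective _ hσ₀bij).symm y) = χ y
      rw [← hkey ((Equiv.ofBijective _ hσ₀bij).symm y)]
      exact congrArg χ ((Equiv.ofBijective _ hσ₀bij).apply_symm_apply y)

lemma card_mul_factorial (n N k : ℕ) :
    Nat.card {φ : Fin n → Fin N // (Finset.univ.image φ).card = k} * k.factorial
      = Nat.card {f : Fin n → Fin k // Surjective f} * N.descFactorial k := by
  have h := Nat.card_eq_of_bijective _ (Fmap_bij (n := n) (N := N) (k := k))
  rw [Nat.card_prod, Nat.card_prod] at h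
  have hp : Nat.card (Equiv.Perm (Fin k)) = k.factorial := by
    rw [Nat.card_eq_fintype_card, Fintype.card_perm, Fintype.card_fin]
  have he : Nat.card (Fin k ↪ Fin N) = N.descFactorial k := by
    rw [Nat.card_eq_fintype_card, Fintype.card_embedding_eq, Fintype.card_fin, Fintype.card_fin]
  rw [hp, he] at h
  exact h

/-- A surjection is normalized when each value equals the rank of its first occurrence. -/
def IsNorm (s : Fin n → Fin k) : Prop := ∀ i, (s i : ℕ) = sdef s i

/-- The decomposition of a surjection into a normalized surjection and a permutation. -/
def Gmap (n k : ℕ) :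
    {s : Fin n → Fin k // Surjective s ∧ IsNorm s} × Equiv.Perm (Fin k) →
      {f : Fin n → Fin k // Surjective f} :=
  fun p => ⟨p.2 ∘ p.1.1, p.2.surjective.comp p.1.2.1⟩

lemma Gmap_bij : Bijective (Gmap n k) := by
  constructor
  · rintro ⟨⟨s, hs, hn⟩, σ⟩ ⟨⟨s', hs', hn'⟩, σ'⟩ h
    have h1 : ∀ i, σ (s i) = σ' (s' i) := fun i =>
      congrFun (congrArg Subtype.val h) i
    have hfib : ∀ i j : Fin n, s i = s j ↔ s' i = s' j := by
      intro i j
      constructor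
      · intro hij
        apply σ'.injective
        rw [← h1 i, ← h1 j, hij]
      · intro hij
        apply σ.injective
        rw [h1 i, h1 j, hij]
    have hss' : s = s' := by
      funext i
      apply Fin.ext
      rw [hn i, hn' i, sdef_congr hfib]
    subst hss'
    have hσ : σ = σ' := by
      apply Equiv.ext
      intro y
      obtain ⟨i, rfl⟩ := hs y
      exact h1 i
    rw [hσ]
  · rintro ⟨t, ht⟩
    have hk' : (Finset.univ.image t).card = k := by
      rw [Finset.image_univ_of_surjective ht, Finset.card_univ, Fintype.card_fin]
    have hfib : ∀ i j : Fin n, sOf t hk' i = sOf t hk' j ↔ t i = t j := fun i j =>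
      sOf_eq_iff t hk'
    have hnorm : IsNorm (sOf t hk') := by
      intro i
      show sdef t i = sdef (sOf t hk') i
      rw [sdef_congr (fun i j => (hfib i j).symm)]
    have hψbij : Bijective (psiOf t hk') :=
      ⟨psiOf_inj t hk', Finite.injective_iff_surjective.mp (psiOf_inj t hk')⟩
    refine ⟨(⟨sOf t hk', sOf_surj t hk', hnorm⟩, Equiv.ofBijective _ hψbij), ?_⟩
    apply Subtype.ext
    exact psiOf_comp_sOf t hk'

lemma surj_card (n k : ℕ) :
    Nat.card {f : Fin n → Fin k // Surjective f}
      = Nat.card {s : Fin n → Fin k // Surjective s ∧ IsNorm s} * k.factorial := by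
  have h := Nat.card_eq_of_bijective _ (Gmap_bij (n := n) (k := k))
  rw [Nat.card_prod] at h
  have hp : Nat.card (Equiv.Perm (Fin k)) = k.factorial := by
    rw [Nat.card_eq_fintype_card, Fintype.card_perm, Fintype.card_fin]
  rw [hp] at h
  exact h.symm

lemma stirling2_eq (n k : ℕ) :
    stirling2 n k = Nat.card {s : Fin n → Fin k // Surjective s ∧ IsNorm s} := by
  rw [stirling2, surj_card, Nat.mul_div_cancel _ k.factorial_pos]

/-- **The key combinatorial count**: the number of maps `Fin n → Fin N` whose range has
exactly `k` elements is `S(n,k) ⬝ N(N-1)⋯(N-k+1)`. -/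
lemma count_eq (n N k : ℕ) :
    Nat.card {φ : Fin n → Fin N // (Finset.univ.image φ).card = k}
      = stirling2 n k * N.descFactorial k := by
  have h := card_mul_factorial n N k
  rw [surj_card] at h
  rw [stirling2_eq]
  apply Nat.eq_of_mul_eq_mul_right k.factorial_pos
  rw [h]
  ring

end DFComb

end DFCombSec

namespace DFMeas

variable {N n : ℕ}

lemma emp_finite (N : ℕ) (hN : 1 ≤ N) (Z : Fin N → E4) : IsFiniteMeasure (emp N Z) := by
  constructor
  have hsum : (∑ i : Fin N, Measure.dirac (Z i)) Set.univ = N := by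
    rw [Measure.finset_sum_apply]
    simp
  rw [emp, Measure.smul_apply, hsum, smul_eq_mul]
  exact ENNReal.mul_lt_top (by simp; omega) (by simp)

/-- Indicator of a box as a product of indicators. -/
lemma prod_indicator (s : Fin n → Set E4) (f : Fin n → E4) :
    ∏ j : Fin n, (s j).indicator (1 : E4 → ℝ≥0∞) (f j)
      = (Set.univ.pi s).indicator (1 : (Fin n → E4) → ℝ≥0∞) f := by
  by_cases h : ∀ j, f j ∈ s j
  · rw [Set.indicator_of_mem (by simpa [Set.mem_univ_pi] using h)]
    rw [Finset.prod_congr rfl fun j _ => Set.indicator_of_mem (h j) _]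
    simp
  · push_neg at h
    obtain ⟨j, hj⟩ := h
    rw [Set.indicator_of_notMem (by simpa [Set.mem_univ_pi] using ⟨j, hj⟩)]
    exact Finset.prod_eq_zero (Finset.mem_univ j) (Set.indicator_of_notMem hj _)

/-- The explicit form of the product of empirical measures. -/
lemma pi_emp (hN : 1 ≤ N) (Z : Fin N → E4) :
    Measure.pi (fun _ : Fin n => emp N Z)
      = ((N : ℝ≥0∞)⁻¹) ^ n • ∑ φ : Fin n → Fin N, Measure.dirac (Z ∘ φ) := by
  haveI hfin : IsFiniteMeasure (emp N Z) := emp_finite N hN Z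
  haveI : ∀ i : Fin n, SigmaFinite ((fun _ : Fin n => emp N Z) i) := fun _ => inferInstance
  refine Measure.pi_eq (μ := fun _ : Fin n => emp N Z) fun s hs => ?_
  have hps : MeasurableSet (Set.univ.pi s) := MeasurableSet.univ_pi hs
  rw [Measure.smul_apply, Measure.finset_sum_apply, smul_eq_mul]
  simp only [Measure.dirac_apply' _ hps]
  symm
  have hrhs : ∀ j : Fin n, emp N Z (s j) = (N : ℝ≥0∞)⁻¹ * ∑ i : Fin N,
      (s j).indicator (1 : E4 → ℝ≥0∞) (Z i) := by
    intro j
    rw [emp, Measure.smul_apply, Measure.finset_sum_apply, smul_eq_mul]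
    simp only [Measure.dirac_apply' _ (hs j)]
  calc ∏ j : Fin n, emp N Z (s j)
      = ∏ j : Fin n, ((N : ℝ≥0∞)⁻¹ * ∑ i : Fin N, (s j).indicator 1 (Z i)) :=
        Finset.prod_congr rfl fun j _ => hrhs j
    _ = ((N : ℝ≥0∞)⁻¹) ^ n * ∏ j : Fin n, ∑ i : Fin N, (s j).indicator 1 (Z i) := by
        rw [Finset.prod_mul_distrib, Finset.prod_const, Finset.card_univ, Fintype.card_fin]
    _ = ((N : ℝ≥0∞)⁻¹) ^ n * ∑ φ : Fin n → Fin N, ∏ j : Fin n, (s j).indicator 1 (Z (φ j)) := by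
        rw [Finset.prod_univ_sum]
        simp [Fintype.piFinset_univ]
    _ = ((N : ℝ≥0∞)⁻¹) ^ n * ∑ φ : Fin n → Fin N, (Set.univ.pi s).indicator 1 (Z ∘ φ) := by
        congr 1
        exact Finset.sum_congr rfl fun φ _ => prod_indicator s (Z ∘ φ)

lemma measurable_comp_right (φ : Fin n → Fin N) :
    Measurable (fun Z : Fin N → E4 => Z ∘ φ) :=
  measurable_pi_lambda _ fun j => measurable_pi_apply (φ j)

lemma measurable_g :
    Measurable (fun Z : Fin N → E4 =>
      ((N : ℝ≥0∞)⁻¹) ^ n • ∑ φ : Fin n → Fin N, Measure.dirac (Z ∘ φ)) := by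
  apply Measure.measurable_of_measurable_coe
  intro s hs
  simp only [Measure.smul_apply, Measure.finset_sum_apply, smul_eq_mul,
    Measure.dirac_apply' _ hs]
  apply Measurable.const_mul
  apply Finset.measurable_sum
  intro φ _
  exact (measurable_const.indicator hs).comp (measurable_comp_right φ)

/-- The Diaconis–Freedman measure of a measurable set, as an explicit sum. -/
lemma dfMeasure_apply (hN : 1 ≤ N) (μ : Measure (Fin N → E4)) {S : Set (Fin n → E4)}
    (hS : MeasurableSet S) :
    dfMeasure N n μ S
      = ((N : ℝ≥0∞)⁻¹) ^ n * ∑ φ : Fin n → Fin N, μ ((fun Z => Z ∘ φ) ⁻¹' S) := by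
  have hfg : (fun Z : Fin N → E4 => Measure.pi fun _ : Fin n => emp N Z)
      = fun Z => ((N : ℝ≥0∞)⁻¹) ^ n • ∑ φ : Fin n → Fin N, Measure.dirac (Z ∘ φ) :=
    funext fun Z => pi_emp hN Z
  rw [dfMeasure, hfg, Measure.bind_apply hS measurable_g.aemeasurable]
  simp only [Measure.smul_apply, Measure.finset_sum_apply, smul_eq_mul,
    Measure.dirac_apply' _ hS]
  rw [lintegral_const_mul _ (by
    apply Finset.measurable_sum
    intro φ _
    exact (measurable_const.indicator hS).comp (measurable_comp_right φ))]
  congr 1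
  rw [lintegral_finset_sum]
  swap
  · intro φ _
    exact (measurable_const.indicator hS).comp (measurable_comp_right φ)
  refine Finset.sum_congr rfl fun φ _ => ?_
  have hind : ∀ Z : Fin N → E4, S.indicator (1 : (Fin n → E4) → ℝ≥0∞) (Z ∘ φ)
      = ((fun Z : Fin N → E4 => Z ∘ φ) ⁻¹' S).indicator 1 Z := fun Z => by
    by_cases h : Z ∘ φ ∈ S
    · rw [Set.indicator_of_mem h,
        Set.indicator_of_mem (show Z ∈ (fun Z : Fin N → E4 => Z ∘ φ) ⁻¹' S from h)]
      rfl
    · rw [Set.indicator_of_notMem h,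
        Set.indicator_of_notMem (show Z ∉ (fun Z : Fin N → E4 => Z ∘ φ) ⁻¹' S from h)]
  simp only [hind]
  exact lintegral_indicator_one ((measurable_comp_right φ) hS)

end DFMeas


namespace DFMeas

variable {N : ℕ}

lemma measurable_setA (Ω : Set E4) (hΩ : MeasurableSet Ω) (W : Finset (Fin N)) :
    MeasurableSet {Z : Fin N → E4 | ∀ i ∈ W, Z i ∈ Ω} := by
  have h : {Z : Fin N → E4 | ∀ i ∈ W, Z i ∈ Ω}
      = ⋂ i ∈ (W : Set (Fin N)), (fun Z : Fin N → E4 => Z i) ⁻¹' Ω := by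
    ext Z; simp
  rw [h]
  exact MeasurableSet.biInter W.countable_toSet fun i _ => (measurable_pi_apply i) hΩ

lemma symm_A (μ : Measure (Fin N → E4)) (hsymm : IsSymmetricMeasure μ)
    (Ω : Set E4) (hΩ : MeasurableSet Ω) (σ : Equiv.Perm (Fin N)) (W : Finset (Fin N)) :
    μ {Z | ∀ i ∈ W.image σ, Z i ∈ Ω} = μ {Z | ∀ i ∈ W, Z i ∈ Ω} := by
  conv_rhs => rw [← hsymm σ]
  rw [Measure.map_apply (measurable_comp_right (N := N) (n := N) σ) (measurable_setA Ω hΩ W)]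
  congr 1
  ext Z
  simp only [Set.mem_setOf_eq, Set.mem_preimage, Function.comp_apply]
  constructor
  · intro h i hi
    exact h _ (Finset.mem_image_of_mem _ hi)
  · intro h j hj
    obtain ⟨i, hi, rfl⟩ := Finset.mem_image.mp hj
    exact h i hi

lemma measurable_setAll (k : ℕ) (Ω : Set E4) (hΩ : MeasurableSet Ω) :
    MeasurableSet {f : Fin k → E4 | ∀ i, f i ∈ Ω} := by
  have h : {f : Fin k → E4 | ∀ i, f i ∈ Ω} = ⋂ i, (fun f : Fin k → E4 => f i) ⁻¹' Ω := by
    ext f; simp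
  rw [h]
  exact MeasurableSet.iInter fun i => (measurable_pi_apply i) hΩ

open Real in
lemma mu_A_le (hN : 1 ≤ N) (hbar : ℝ) (hhbar : 0 < hbar)
    (μ : Measure (Fin N → E4)) (hsymm : IsSymmetricMeasure μ)
    (hpauli : ∀ (k : ℕ) (hk1 : 1 ≤ k) (hkN : k ≤ N), ∀ A : Set (Fin k → E4),
      MeasurableSet A →
      marg N k μ hkN A
        ≤ ENNReal.ofReal (((2 * π * hbar) ^ (2 * k) * (N.descFactorial k : ℝ))⁻¹)
            * volume A)
    (Ω : Set E4) (hΩ : MeasurableSet Ω) (T : Finset (Fin N)) (hT : T.Nonempty) :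
    μ {Z | ∀ i ∈ T, Z i ∈ Ω}
      ≤ ENNReal.ofReal (((2 * π * hbar) ^ (2 * T.card) * (N.descFactorial T.card : ℝ))⁻¹)
          * (volume Ω) ^ T.card := by
  set k := T.card with hkdef
  have hk1 : 1 ≤ k := Finset.Nonempty.card_pos hT
  have hkN : k ≤ N := by
    have := Finset.card_le_univ T
    simpa using this
  set T₀ : Finset (Fin N) := Finset.univ.image (Fin.castLE hkN) with hT₀
  have hT₀card : T₀.card = k := by
    rw [hT₀, Finset.card_image_of_injective _ (Fin.castLE_injective hkN),
      Finset.card_univ, Fintype.card_fin]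
  have hcompl : (T₀ᶜ).card = (Tᶜ).card := by
    rw [Finset.card_compl, Finset.card_compl, hT₀card]
  let e : {x : Fin N // x ∈ T₀} ≃ {x : Fin N // x ∈ T} :=
    Finset.equivOfCardEq (by rw [hT₀card])
  let e' : {x : Fin N // ¬ x ∈ T₀} ≃ {x : Fin N // ¬ x ∈ T} :=
    (Equiv.subtypeEquivRight fun x => (Finset.mem_compl (s := T₀) (a := x)).symm).trans
      ((Finset.equivOfCardEq hcompl).trans
        (Equiv.subtypeEquivRight fun x => Finset.mem_compl))
  let σ : Equiv.Perm (Fin N) :=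
    (Equiv.sumCompl (· ∈ T₀)).symm.trans ((e.sumCongr e').trans (Equiv.sumCompl (· ∈ T)))
  have hmaps : ∀ x, x ∈ T₀ → σ x ∈ T := by
    intro x hx
    show (Equiv.sumCompl (· ∈ T)) ((e.sumCongr e') ((Equiv.sumCompl (· ∈ T₀)).symm x)) ∈ T
    rw [Equiv.sumCompl_symm_apply_of_pos hx]
    simp only [Equiv.sumCongr_apply, Sum.map_inl, Equiv.sumCompl_apply_inl]
    exact (e ⟨x, hx⟩).2
  have himg : T₀.image σ = T := by
    apply Finset.eq_of_subset_of_card_le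
    · intro y hy
      obtain ⟨x, hx, rfl⟩ := Finset.mem_image.mp hy
      exact hmaps x hx
    · rw [Finset.card_image_of_injective _ σ.injective, hT₀card]
  have hSk : MeasurableSet {f : Fin k → E4 | ∀ i, f i ∈ Ω} := measurable_setAll k Ω hΩ
  have hmargA : marg N k μ hkN {f : Fin k → E4 | ∀ i, f i ∈ Ω}
      = μ {Z | ∀ i ∈ T₀, Z i ∈ Ω} := by
    rw [marg, Measure.map_apply (f := fun (Z : Fin N → E4) (i : Fin k) => Z (Fin.castLE hkN i))
      (measurable_pi_lambda _ fun i => measurable_pi_apply _) hSk]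
    congr 1
    ext Z
    simp only [Set.mem_preimage, Set.mem_setOf_eq]
    constructor
    · intro h i hi
      obtain ⟨j, -, rfl⟩ := Finset.mem_image.mp hi
      exact h j
    · intro h j
      exact h _ (Finset.mem_image_of_mem _ (Finset.mem_univ j))
  have hvol : volume {f : Fin k → E4 | ∀ i, f i ∈ Ω} = (volume Ω) ^ k := by
    have h : {f : Fin k → E4 | ∀ i, f i ∈ Ω} = Set.univ.pi fun _ : Fin k => Ω := by
      ext f; simp [Set.mem_univ_pi]
    rw [h, volume_pi, Measure.pi_pi]
    simp
  calc μ {Z | ∀ i ∈ T, Z i ∈ Ω}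
      = μ {Z | ∀ i ∈ T₀, Z i ∈ Ω} := by rw [← himg]; exact symm_A μ hsymm Ω hΩ σ T₀
    _ = marg N k μ hkN {f : Fin k → E4 | ∀ i, f i ∈ Ω} := hmargA.symm
    _ ≤ ENNReal.ofReal (((2 * π * hbar) ^ (2 * k) * (N.descFactorial k : ℝ))⁻¹)
          * volume {f : Fin k → E4 | ∀ i, f i ∈ Ω} := hpauli k hk1 hkN _ hSk
    _ = ENNReal.ofReal (((2 * π * hbar) ^ (2 * k) * (N.descFactorial k : ℝ))⁻¹)
          * (volume Ω) ^ k := by rw [hvol]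

end DFMeas


/-- **expansion of the Diaconis–Freedman measure.** -/
theorem df_measure_box_bound (N : ℕ) (hN : 1 ≤ N) (hbar : ℝ) (hhbar : 0 < hbar)
    (μ : Measure (Fin N → E4)) [IsProbabilityMeasure μ]
    (hsymm : IsSymmetricMeasure μ)
    -- the semiclassical Pauli principle for the marginals of `μ`
    (hpauli : ∀ (k : ℕ) (hk1 : 1 ≤ k) (hkN : k ≤ N), ∀ A : Set (Fin k → E4),
      MeasurableSet A →
      marg N k μ hkN A
        ≤ ENNReal.ofReal (((2 * π * hbar) ^ (2 * k) * (N.descFactorial k : ℝ))⁻¹)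
            * volume A) :
    ∀ (Ω : Set E4), MeasurableSet Ω → ∀ (n : ℕ), 1 ≤ n → n ≤ N →
      dfMeasure N n μ {f : Fin n → E4 | ∀ i, f i ∈ Ω}
        ≤ ((N : ℝ≥0∞))⁻¹ ^ n *
            ∑ k ∈ Finset.Icc 1 n,
              (volume Ω) ^ k * (stirling2 n k : ℝ≥0∞)
                * (ENNReal.ofReal ((2 * π * hbar) ^ (2 * k)))⁻¹ := by
  intro Ω hΩ n hn1 hnN
  haveI : Nonempty (Fin n) := ⟨⟨0, by omega⟩⟩
  have hS : MeasurableSet {f : Fin n → E4 | ∀ i, f i ∈ Ω} := DFMeas.measurable_setAll n Ω hΩ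
  rw [DFMeas.dfMeasure_apply hN μ hS]
  refine mul_le_mul_right ?_ _
  have hpre : ∀ φ : Fin n → Fin N,
      ((fun Z : Fin N → E4 => Z ∘ φ) ⁻¹' {f : Fin n → E4 | ∀ i, f i ∈ Ω})
        = {Z : Fin N → E4 | ∀ i ∈ Finset.univ.image φ, Z i ∈ Ω} := by
    intro φ
    ext Z
    simp only [Set.mem_preimage, Set.mem_setOf_eq, Function.comp_apply]
    constructor
    · intro h j hj
      obtain ⟨i, -, rfl⟩ := Finset.mem_image.mp hj
      exact h i
    · intro h i
      exact h _ (Finset.mem_image_of_mem _ (Finset.mem_univ i))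
  calc ∑ φ : Fin n → Fin N, μ ((fun Z => Z ∘ φ) ⁻¹' {f : Fin n → E4 | ∀ i, f i ∈ Ω})
      ≤ ∑ φ : Fin n → Fin N,
          (ENNReal.ofReal (((2 * π * hbar) ^ (2 * (Finset.univ.image φ).card) *
              (N.descFactorial (Finset.univ.image φ).card : ℝ))⁻¹)
            * (volume Ω) ^ (Finset.univ.image φ).card) := by
        refine Finset.sum_le_sum fun φ _ => ?_
        rw [hpre φ]
        exact DFMeas.mu_A_le hN hbar hhbar μ hsymm hpauli Ω hΩ _
          (Finset.image_nonempty.mpr Finset.univ_nonempty)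
    _ = ∑ k ∈ Finset.univ.image (fun φ : Fin n → Fin N => (Finset.univ.image φ).card),
          (Finset.univ.filter fun φ : Fin n → Fin N => (Finset.univ.image φ).card = k).card •
            (ENNReal.ofReal (((2 * π * hbar) ^ (2 * k) * (N.descFactorial k : ℝ))⁻¹)
              * (volume Ω) ^ k) :=
        Finset.sum_comp
          (fun k => ENNReal.ofReal (((2 * π * hbar) ^ (2 * k) * (N.descFactorial k : ℝ))⁻¹)
            * (volume Ω) ^ k)
          (fun φ : Fin n → Fin N => (Finset.univ.image φ).card)
    _ ≤ ∑ k ∈ Finset.Icc 1 n,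
          (Finset.univ.filter fun φ : Fin n → Fin N => (Finset.univ.image φ).card = k).card •
            (ENNReal.ofReal (((2 * π * hbar) ^ (2 * k) * (N.descFactorial k : ℝ))⁻¹)
              * (volume Ω) ^ k) := by
        refine Finset.sum_le_sum_of_subset ?_
        intro k hk
        obtain ⟨φ, -, rfl⟩ := Finset.mem_image.mp hk
        refine Finset.mem_Icc.mpr ⟨?_, ?_⟩
        · exact Finset.Nonempty.card_pos (Finset.image_nonempty.mpr Finset.univ_nonempty)
        · exact Finset.card_image_le.trans (by simp)
    _ ≤ ∑ k ∈ Finset.Icc 1 n,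
          (volume Ω) ^ k * (stirling2 n k : ℝ≥0∞)
            * (ENNReal.ofReal ((2 * π * hbar) ^ (2 * k)))⁻¹ := by
        refine Finset.sum_le_sum fun k hk => ?_
        obtain ⟨hk1, hkn⟩ := Finset.mem_Icc.mp hk
        have hkN : k ≤ N := hkn.trans hnN
        have hdF : 0 < N.descFactorial k := Nat.pos_of_ne_zero fun h0 =>
          absurd (Nat.descFactorial_eq_zero_iff_lt.mp h0) (not_lt.mpr hkN)
        have hcount : (Finset.univ.filter fun φ : Fin n → Fin N =>
            (Finset.univ.image φ).card = k).card = stirling2 n k * N.descFactorial k := by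
          rw [← DFComb.count_eq n N k, Nat.card_eq_fintype_card, Fintype.card_subtype]
        have hP : (0 : ℝ) < (2 * π * hbar) ^ (2 * k) := by positivity
        have hof : ENNReal.ofReal (((2 * π * hbar) ^ (2 * k) * (N.descFactorial k : ℝ))⁻¹)
            = (ENNReal.ofReal ((2 * π * hbar) ^ (2 * k)))⁻¹
                * ((N.descFactorial k : ℝ≥0∞))⁻¹ := by
          rw [ENNReal.ofReal_inv_of_pos (by positivity), ENNReal.ofReal_mul hP.le,
            ENNReal.ofReal_natCast,
            ENNReal.mul_inv (Or.inl (ENNReal.ofReal_pos.mpr hP).ne')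
              (Or.inl ENNReal.ofReal_ne_top)]
        have hcancel : ((N.descFactorial k : ℝ≥0∞)) * ((N.descFactorial k : ℝ≥0∞))⁻¹ = 1 :=
          ENNReal.mul_inv_cancel (by exact_mod_cast hdF.ne') (ENNReal.natCast_ne_top _)
        rw [hcount, nsmul_eq_mul]
        refine le_of_eq ?_
        calc ((stirling2 n k * N.descFactorial k : ℕ) : ℝ≥0∞) *
              (ENNReal.ofReal (((2 * π * hbar) ^ (2 * k) * (N.descFactorial k : ℝ))⁻¹)
                * (volume Ω) ^ k)
            = ((volume Ω) ^ k * (stirling2 n k : ℝ≥0∞)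
                * (ENNReal.ofReal ((2 * π * hbar) ^ (2 * k)))⁻¹)
              * ((N.descFactorial k : ℝ≥0∞) * ((N.descFactorial k : ℝ≥0∞))⁻¹) := by
              rw [hof]; push_cast; ring
          _ = (volume Ω) ^ k * (stirling2 n k : ℝ≥0∞)
                * (ENNReal.ofReal ((2 * π * hbar) ^ (2 * k)))⁻¹ := by
              rw [hcancel, mul_one]

end
end

section
/- Set ħ² = 1/N and |Ω| = N^{-β} with 0 < β < 1. For any 0 < δ < (1−β)/2 there exist constants C > 0 and δ' > 0, depending only on β and δ, such that for n = ⌊N^δ⌋: (2π)^{2n}·N^{-n}·Σ_{k=1}^n |Ω|^{k−n}·S(n,k)/(2πħ)^{2k} ≤ C·N^{δ'}, where S(n,k) is the Stirling number of the second kind (the number of partitions of an n-element set into k nonempty blocks). -/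
noncomputable section
open Filter Topology Real

set_option maxHeartbeats 1000000

lemma orderEmbOfFin_congr {α : Type*} [LinearOrder α] {s t : Finset α} {k : ℕ}
    (hst : s = t) (h1 : s.card = k) (h2 : t.card = k) :
    s.orderEmbOfFin h1 = t.orderEmbOfFin h2 := by
  subst hst; rfl

lemma card_surj_le (n k : ℕ) :
    Nat.card {f : Fin n → Fin k // Function.Surjective f} ≤
      n.descFactorial k * k ^ (n - k) := by
  classical
  have hne : ∀ (f : {f : Fin n → Fin k // Function.Surjective f}) (c : Fin k),
      (Finset.univ.filter (fun x => f.1 x = c)).Nonempty := by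
    intro f c
    obtain ⟨x, hx⟩ := f.2 c
    exact ⟨x, by simp [hx]⟩
  set m : {f : Fin n → Fin k // Function.Surjective f} → Fin k → Fin n :=
    fun f c => (Finset.univ.filter (fun x => f.1 x = c)).min' (hne f c) with hm_def
  have hm : ∀ (f : {f : Fin n → Fin k // Function.Surjective f}) (c : Fin k),
      f.1 (m f c) = c := by
    intro f c
    have := Finset.min'_mem _ (hne f c)
    simpa [hm_def] using this
  have hminj : ∀ f, Function.Injective (m f) := by
    intro f c1 c2 h
    have h1 := hm f c1
    rw [h, hm f c2] at h1
    exact h1.symm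
  set s : {f : Fin n → Fin k // Function.Surjective f} → Finset (Fin n) :=
    fun f => Finset.univ \ Finset.image (m f) Finset.univ with hs_def
  have hscard : ∀ f, (s f).card = n - k := by
    intro f
    rw [hs_def]
    simp only
    rw [Finset.card_sdiff_of_subset (Finset.subset_univ _)]
    rw [Finset.card_image_of_injective _ (hminj f)]
    simp
  set Φ : {f : Fin n → Fin k // Function.Surjective f} →
      (Fin k ↪ Fin n) × (Fin (n - k) → Fin k) :=
    fun f => (⟨m f, hminj f⟩, fun i => f.1 ((s f).orderEmbOfFin (hscard f) i)) with hΦ_def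
  have hΦinj : Function.Injective Φ := by
    intro f1 f2 h
    have hm12 : m f1 = m f2 := by
      have h1 := congrArg Prod.fst h
      simp only [hΦ_def] at h1
      exact congrArg (fun e : Fin k ↪ Fin n => e.toFun) h1
    have hs12 : s f1 = s f2 := by rw [hs_def]; simp only [hm12]
    have hg12 : (fun i => f1.1 ((s f1).orderEmbOfFin (hscard f1) i))
        = fun i => f2.1 ((s f2).orderEmbOfFin (hscard f2) i) := congrArg Prod.snd h
    have hemb : (s f1).orderEmbOfFin (hscard f1) = (s f2).orderEmbOfFin (hscard f2) :=
      orderEmbOfFin_congr hs12 _ _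
    apply Subtype.ext
    funext x
    by_cases hx : x ∈ s f1
    · have hxr : x ∈ Set.range ((s f1).orderEmbOfFin (hscard f1)) := by
        rw [Finset.range_orderEmbOfFin]; exact hx
      obtain ⟨i, hi⟩ := hxr
      have h2 := congrFun hg12 i
      rw [← hemb] at h2
      rw [hi] at h2
      exact h2
    · have hx' : x ∈ Finset.image (m f1) Finset.univ := by
        rw [hs_def] at hx
        simp only [Finset.mem_sdiff, Finset.mem_univ, true_and, not_not] at hx
        exact hx
      obtain ⟨c, _, hc⟩ := Finset.mem_image.mp hx'
      rw [← hc, hm f1 c, hm12, hm f2 c]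
  calc Nat.card {f : Fin n → Fin k // Function.Surjective f}
      ≤ Fintype.card ((Fin k ↪ Fin n) × (Fin (n - k) → Fin k)) := by
        rw [Nat.card_eq_fintype_card]
        exact Fintype.card_le_of_injective Φ hΦinj
    _ = n.descFactorial k * k ^ (n - k) := by
        rw [Fintype.card_prod, Fintype.card_embedding_eq, Fintype.card_fun]
        simp

lemma stirling2_le (n k : ℕ) : stirling2 n k ≤ n.choose k * k ^ (n - k) := by
  unfold stirling2
  have h := card_surj_le n k
  rw [Nat.descFactorial_eq_factorial_mul_choose, mul_assoc] at h
  calc Nat.card {f : Fin n → Fin k // Function.Surjective f} / k.factorial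
      ≤ k.factorial * (n.choose k * k ^ (n - k)) / k.factorial := Nat.div_le_div_right h
    _ = n.choose k * k ^ (n - k) := Nat.mul_div_cancel_left _ k.factorial_pos

lemma stirling2_le_pow (n k : ℕ) (hk : k ≤ n) : stirling2 n k ≤ (n ^ 2) ^ (n - k) := by
  have h1 := stirling2_le n k
  have h2 : n.choose k ≤ n ^ (n - k) := by
    rw [← Nat.choose_symm hk]
    calc n.choose (n - k) ≤ n.choose (n - k) * (n - k).factorial :=
          Nat.le_mul_of_pos_right _ (Nat.factorial_pos _)
      _ = n.descFactorial (n - k) := by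
          rw [Nat.descFactorial_eq_factorial_mul_choose]; ring
      _ ≤ n ^ (n - k) := Nat.descFactorial_le_pow n (n - k)
  have h3 : k ^ (n - k) ≤ n ^ (n - k) := Nat.pow_le_pow_left hk _
  calc stirling2 n k ≤ n.choose k * k ^ (n - k) := h1
    _ ≤ n ^ (n - k) * n ^ (n - k) := Nat.mul_le_mul h2 h3
    _ = (n ^ 2) ^ (n - k) := by rw [← mul_pow]; ring_nf

/-- **control of the combinatorial sum.** With `ħ = N^{-1/2}`,
`|Ω| = N^{-β}` (`0 < β < 1`) and `n = ⌊N^δ⌋` for `0 < δ < (1-β)/2`, the sum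
`(2π)^{2n} N^{-n} Σ_{k=1}^n |Ω|^{k-n} S(n,k)/(2πħ)^{2k}` grows at most polynomially. -/
theorem stirling_sum_control (β δ : ℝ) (hβ0 : 0 < β) (hβ1 : β < 1)
    (hδ0 : 0 < δ) (hδ : δ < (1 - β) / 2) :
    ∃ C > (0 : ℝ), ∃ δ' > (0 : ℝ), ∀ N : ℕ, 2 ≤ N →
      (2 * π) ^ (2 * Nat.floor ((N : ℝ) ^ δ)) * ((N : ℝ) ^ Nat.floor ((N : ℝ) ^ δ))⁻¹ *
          ∑ k ∈ Finset.Icc 1 (Nat.floor ((N : ℝ) ^ δ)),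
            ((N : ℝ) ^ (-β)) ^ ((k : ℤ) - (Nat.floor ((N : ℝ) ^ δ) : ℤ))
              * (stirling2 (Nat.floor ((N : ℝ) ^ δ)) k : ℝ)
              / (2 * π * (N : ℝ) ^ (-(1 : ℝ) / 2)) ^ (2 * k)
        ≤ C * (N : ℝ) ^ δ' := by
  have hπ : (0:ℝ) < π := Real.pi_pos
  have hπ3 : (3:ℝ) < π := by
    have := Real.pi_gt_d6
    linarith
  set ε : ℝ := 1 - β - 2 * δ with hε_def
  have hε : 0 < ε := by simp only [hε_def]; linarith
  set M : ℝ := ((2*π)^2) ^ (δ/ε) with hM_def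
  set C : ℝ := ((2*π)^2) ^ M with hC_def
  have hbase1 : (1:ℝ) ≤ (2*π)^2 := by nlinarith
  have hM0 : 0 ≤ M := Real.rpow_nonneg (by positivity) _
  have hC1 : (1:ℝ) ≤ C := Real.one_le_rpow hbase1 hM0
  refine ⟨C, by linarith, δ, hδ0, ?_⟩
  intro N hN
  have hx2 : (2:ℝ) ≤ (N:ℝ) := by exact_mod_cast hN
  set x : ℝ := (N:ℝ) with hx_def
  have hx0 : (0:ℝ) < x := by linarith
  have hx1 : (1:ℝ) ≤ x := by linarith
  set n : ℕ := Nat.floor (x ^ δ) with hn_def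
  have hnle : (n:ℝ) ≤ x ^ δ := Nat.floor_le (Real.rpow_nonneg hx0.le δ)
  set r : ℝ := (2*π)^2 * x ^ (β - 1 + 2*δ) with hr_def
  have hr0 : (0:ℝ) ≤ r := by positivity
  -- r^j ≤ C for all j ≤ n
  have hrC : ∀ j : ℕ, j ≤ n → r ^ j ≤ C := by
    intro j hj
    rcases le_or_gt r 1 with hr1 | hr1
    · exact le_trans (pow_le_one₀ hr0 hr1) hC1
    · have hxε0 : (0:ℝ) < x ^ ε := Real.rpow_pos_of_pos hx0 _
      have hprod : r * x ^ ε = (2*π)^2 := by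
        rw [hr_def, mul_assoc, ← Real.rpow_add hx0]
        have : β - 1 + 2*δ + ε = 0 := by simp only [hε_def]; ring
        rw [this, Real.rpow_zero, mul_one]
      have hxε : x ^ ε ≤ (2*π)^2 := by nlinarith
      have hxδM : x ^ δ ≤ M := by
        have h1 : x ^ δ = (x ^ ε) ^ (δ/ε) := by
          rw [← Real.rpow_mul hx0.le]
          congr 1
          field_simp
        rw [h1, hM_def]
        exact Real.rpow_le_rpow hxε0.le hxε (by positivity)
      have hnM : (n:ℝ) ≤ M := hnle.trans hxδM
      have hr2 : r ≤ (2*π)^2 := by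
        have hle1 : x ^ (β - 1 + 2*δ) ≤ 1 :=
          Real.rpow_le_one_of_one_le_of_nonpos hx1 (by linarith)
        calc r = (2*π)^2 * x ^ (β - 1 + 2*δ) := hr_def
          _ ≤ (2*π)^2 * 1 := by nlinarith
          _ = (2*π)^2 := mul_one _
      calc r ^ j ≤ ((2*π)^2) ^ j := pow_le_pow_left₀ hr0 hr2 j
        _ ≤ ((2*π)^2) ^ n := pow_le_pow_right₀ hbase1 hj
        _ = ((2*π)^2) ^ ((n:ℕ):ℝ) := (Real.rpow_natCast _ n).symm
        _ ≤ ((2*π)^2) ^ M := Real.rpow_le_rpow_of_exponent_le hbase1 hnM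
        _ = C := hC_def.symm
  -- per-term bound
  have key : ∀ k ∈ Finset.Icc 1 n,
      (2*π)^(2*n) * (x^n)⁻¹ * ((x^(-β))^((k:ℤ) - (n:ℤ)) * (stirling2 n k : ℝ)
        / (2*π*x^(-(1:ℝ)/2))^(2*k)) ≤ C := by
    intro k hk
    obtain ⟨hk1, hkn⟩ := Finset.mem_Icc.mp hk
    set j : ℕ := n - k with hj_def
    have hjr : ((j:ℕ):ℝ) = (n:ℝ) - (k:ℝ) := by
      exact Nat.cast_sub hkn
    have e1 : ((2*π)*x^(-(1:ℝ)/2))^(2*k) = (2*π)^(2*k) / x^((k:ℝ)) := by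
      rw [mul_pow, ← Real.rpow_natCast (x ^ (-(1:ℝ)/2)) (2*k), ← Real.rpow_mul hx0.le,
        div_eq_mul_inv]
      congr 1
      rw [← Real.rpow_neg hx0.le]
      congr 1
      push_cast
      ring
    have e2 : (x^(-β))^((k:ℤ) - (n:ℤ)) = x ^ (β * (j:ℝ)) := by
      rw [← Real.rpow_intCast (x ^ (-β)) ((k:ℤ) - (n:ℤ)), ← Real.rpow_mul hx0.le]
      congr 1
      push_cast
      rw [hjr]
      ring
    have e3 : (x^n)⁻¹ = (x ^ ((n:ℝ)))⁻¹ := by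
      rw [← Real.rpow_natCast x n]
    have hp : ((2*π:ℝ))^(2*n) = (2*π)^(2*j) * (2*π)^(2*k) := by
      rw [← pow_add]
      congr 1
      omega
    have e5 : x ^ ((β-1) * (j:ℝ)) = x ^ (β * (j:ℝ)) * x ^ ((k:ℝ)) / x ^ ((n:ℝ)) := by
      rw [div_eq_mul_inv, ← Real.rpow_neg hx0.le, ← Real.rpow_add hx0, ← Real.rpow_add hx0]
      congr 1
      rw [hjr]
      ring
    have heq : (2*π)^(2*n) * (x^n)⁻¹ * ((x^(-β))^((k:ℤ) - (n:ℤ)) * (stirling2 n k : ℝ)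
        / (2*π*x^(-(1:ℝ)/2))^(2*k))
        = (2*π)^(2*j) * x ^ ((β-1) * (j:ℝ)) * (stirling2 n k : ℝ) := by
      rw [e1, e2, e3, hp, e5]
      have h1 : ((2*π:ℝ))^(2*k) ≠ 0 := by positivity
      have h2 : x ^ ((k:ℝ)) ≠ 0 := by positivity
      have h3 : x ^ ((n:ℝ)) ≠ 0 := by positivity
      field_simp
    have hSt : (stirling2 n k : ℝ) ≤ x ^ (2*δ*(j:ℝ)) := by
      have h1 : (stirling2 n k : ℝ) ≤ (((n:ℝ))^2) ^ j := by
        exact_mod_cast stirling2_le_pow n k hkn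
      have h2 : ((n:ℝ))^2 ≤ x ^ (2*δ) := by
        have h3 : ((n:ℝ))^2 ≤ (x^δ)^2 := by
          have := Nat.cast_nonneg (α := ℝ) n
          nlinarith
        have h4 : (x^δ)^(2:ℕ) = x ^ (2*δ) := by
          rw [← Real.rpow_natCast (x^δ) 2, ← Real.rpow_mul hx0.le]
          norm_num
          ring_nf
        calc ((n:ℝ))^2 ≤ (x^δ)^2 := h3
          _ = x ^ (2*δ) := h4
      calc (stirling2 n k : ℝ) ≤ (((n:ℝ))^2) ^ j := h1
        _ ≤ (x ^ (2*δ)) ^ j := pow_le_pow_left₀ (by positivity) h2 j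
        _ = x ^ (2*δ*(j:ℝ)) := by
            rw [← Real.rpow_natCast (x ^ (2*δ)) j, ← Real.rpow_mul hx0.le]
    have hterm : (2*π)^(2*j) * x ^ ((β-1) * (j:ℝ)) * (stirling2 n k : ℝ) ≤ r ^ j := by
      have h0 : (0:ℝ) ≤ (2*π)^(2*j) * x ^ ((β-1) * (j:ℝ)) := by positivity
      calc (2*π)^(2*j) * x ^ ((β-1) * (j:ℝ)) * (stirling2 n k : ℝ)
          ≤ (2*π)^(2*j) * x ^ ((β-1) * (j:ℝ)) * x ^ (2*δ*(j:ℝ)) :=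
            mul_le_mul_of_nonneg_left hSt h0
        _ = ((2*π)^2)^j * (x ^ (β - 1 + 2*δ))^j := by
            rw [mul_assoc, ← Real.rpow_add hx0, pow_mul]
            congr 1
            rw [← Real.rpow_natCast (x ^ (β - 1 + 2*δ)) j, ← Real.rpow_mul hx0.le]
            congr 1
            ring
        _ = r ^ j := by rw [hr_def]; ring
    rw [heq]
    exact le_trans hterm (hrC j (by omega))
  rw [Finset.mul_sum]
  calc (∑ k ∈ Finset.Icc 1 n, (2*π)^(2*n) * (x^n)⁻¹ * ((x^(-β))^((k:ℤ) - (n:ℤ))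
          * (stirling2 n k : ℝ) / (2*π*x^(-(1:ℝ)/2))^(2*k)))
      ≤ ∑ k ∈ Finset.Icc 1 n, C := Finset.sum_le_sum key
    _ = ((Finset.Icc 1 n).card : ℝ) * C := by rw [Finset.sum_const, nsmul_eq_mul]
    _ ≤ x ^ δ * C := by
        have hcard : ((Finset.Icc 1 n).card : ℝ) ≤ (n:ℝ) := by
          rw [Nat.card_Icc]
          push_cast
          norm_num
        nlinarith [Real.rpow_nonneg hx0.le δ]
    _ = C * x ^ δ := mul_comm _ _

end
end

section
/- Let ħ² = 1/N and let μ_N be a symmetric probability measure on (ℝ⁴)^N whose marginals have densities bounded as μ_N^{(k)} ≤ ((2πħ)^{2k}·N(N−1)…(N−k+1))^{-1}. Let P^DF_N be the pushforward of μ_N under Z ↦ Emp_Z, a probability measure on P(ℝ⁴). Let Ω_m ⊂ ℝ⁴ be a Borel set with |Ω_m| = N^{-β}, 0 < β < 1. Then for any 0 < δ < (1−β)/2 and any ε > 0 there exist constants C_δ, c_δ > 0 such that P^DF_N({ μ : ∫_{Ω_m} dμ ≥ (1+ε)(2π)^{-2}|Ω_m| }) ≤ C_δ · e^{−c_δ N^δ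 ln(1+ε)}. -/
noncomputable section
open MeasureTheory Filter Topology Real
open scoped ENNReal

/-! ### Auxiliary lemmas -/

open Classical in
lemma emp_apply_aux (N : ℕ) (Z : Fin N → E4) (Ωm : Set E4) (hΩm : MeasurableSet Ωm) :
    emp N Z Ωm = ((Finset.univ.filter (fun i => Z i ∈ Ωm)).card : ℝ≥0∞) / N := by
  simp only [emp, Measure.smul_apply, Measure.finset_sum_apply,
    Measure.dirac_apply' _ hΩm, smul_eq_mul]
  rw [Finset.card_filter, Nat.cast_sum, ENNReal.div_eq_inv_mul]
  congr 1
  refine Finset.sum_congr rfl fun i _ => ?_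
  by_cases h : Z i ∈ Ωm <;> simp [Set.indicator_apply, h]

open Classical in
lemma descFactorial_card_eq_aux (N k : ℕ) (Z : Fin N → E4) (Ωm : Set E4) :
    ((Finset.univ.filter (fun i => Z i ∈ Ωm)).card).descFactorial k
      = ∑ f : Fin k ↪ Fin N, if (∀ j, Z (f j) ∈ Ωm) then 1 else 0 := by
  have e : (Fin k ↪ {i : Fin N // Z i ∈ Ωm}) ≃ {f : Fin k ↪ Fin N // ∀ j, Z (f j) ∈ Ωm} :=
  { toFun := fun g => ⟨g.trans (Function.Embedding.subtype _), fun j => (g j).2⟩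
    invFun := fun fh => Function.Embedding.codRestrict _ fh.1 fh.2
    left_inv := fun g => Function.Embedding.ext fun j => Subtype.ext rfl
    right_inv := fun fh => Subtype.ext (Function.Embedding.ext fun j => rfl) }
  calc ((Finset.univ.filter (fun i => Z i ∈ Ωm)).card).descFactorial k
      = (Fintype.card {i : Fin N // Z i ∈ Ωm}).descFactorial (Fintype.card (Fin k)) := by
        rw [Fintype.card_subtype, Fintype.card_fin]
    _ = Fintype.card (Fin k ↪ {i : Fin N // Z i ∈ Ωm}) := (Fintype.card_embedding_eq).symm
    _ = Fintype.card {f : Fin k ↪ Fin N // ∀ j, Z (f j) ∈ Ωm} := Fintype.card_congr e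
    _ = (Finset.univ.filter (fun f : Fin k ↪ Fin N => ∀ j, Z (f j) ∈ Ωm)).card :=
        Fintype.card_subtype _
    _ = _ := Finset.card_filter _ _

open Classical in
lemma symm_cylinder_aux {N k : ℕ} (hk : k ≤ N) (μ : Measure (Fin N → E4))
    (hsym : IsSymmetricMeasure μ) (Ωm : Set E4) (hΩm : MeasurableSet Ωm)
    (f : Fin k ↪ Fin N) :
    μ {Z | ∀ j, Z (f j) ∈ Ωm} = μ {Z | ∀ j, Z (Fin.castLE hk j) ∈ Ωm} := by
  set c : Fin k → Fin N := Fin.castLE hk with hc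
  have hcinj : Function.Injective c := Fin.castLE_injective hk
  set e : {x : Fin N // x ∈ Set.range c} ≃ {x : Fin N // x ∈ Set.range f} :=
    (Equiv.ofInjective c hcinj).symm.trans (Equiv.ofInjective f f.injective) with he
  set σ : Equiv.Perm (Fin N) := e.extendSubtype with hσdef
  have key : ∀ j, σ (c j) = f j := by
    intro j
    have h1 : σ (c j) = ↑(e ⟨c j, ⟨j, rfl⟩⟩) := e.extendSubtype_apply_of_mem (c j) ⟨j, rfl⟩
    have h2 : (⟨c j, ⟨j, rfl⟩⟩ : {x : Fin N // x ∈ Set.range c})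
        = Equiv.ofInjective c hcinj j := by
      apply Subtype.ext; rfl
    rw [h1, he, Equiv.trans_apply, h2, Equiv.symm_apply_apply, Equiv.ofInjective_apply]
  have hmeasσ : Measurable (fun Z : Fin N → E4 => Z ∘ σ) :=
    measurable_pi_lambda _ (fun j => measurable_pi_apply _)
  have hA : MeasurableSet {Z : Fin N → E4 | ∀ j, Z (c j) ∈ Ωm} := by
    have : {Z : Fin N → E4 | ∀ j, Z (c j) ∈ Ωm}
        = ⋂ j, (fun Z : Fin N → E4 => Z (c j)) ⁻¹' Ωm := by
      ext Z; simp
    rw [this]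
    exact MeasurableSet.iInter fun j => (measurable_pi_apply _) hΩm
  calc μ {Z | ∀ j, Z (f j) ∈ Ωm}
      = μ ((fun Z : Fin N → E4 => Z ∘ σ) ⁻¹' {Z | ∀ j, Z (c j) ∈ Ωm}) := by
        congr 1; ext Z
        simp only [Set.mem_preimage, Set.mem_setOf_eq, Function.comp_apply]
        constructor <;> intro h j <;> [skip; skip] <;> simpa [key j] using h j
    _ = μ.map (fun Z => Z ∘ σ) {Z | ∀ j, Z (c j) ∈ Ωm} := (Measure.map_apply hmeasσ hA).symm
    _ = μ {Z | ∀ j, Z (c j) ∈ Ωm} := by rw [hsym σ]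

open Classical in
lemma marg_box_aux {N k : ℕ} (hk : k ≤ N) (μ : Measure (Fin N → E4)) (Ωm : Set E4)
    (hΩm : MeasurableSet Ωm) :
    marg N k μ hk (Set.univ.pi fun _ : Fin k => Ωm)
      = μ {Z | ∀ j, Z (Fin.castLE hk j) ∈ Ωm} := by
  have hmeas : Measurable (fun (Z : Fin N → E4) (i : Fin k) => Z (Fin.castLE hk i)) :=
    measurable_pi_lambda _ fun i => measurable_pi_apply _
  rw [marg, Measure.map_apply hmeas (MeasurableSet.univ_pi fun _ => hΩm)]
  congr 1
  ext Z
  simp [Set.mem_univ_pi]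

open Classical in
lemma moment_identity_aux {N k : ℕ} (hk : k ≤ N) (μ : Measure (Fin N → E4))
    (hsym : IsSymmetricMeasure μ) (Ωm : Set E4)
    (hΩm : MeasurableSet Ωm) :
    ∫⁻ Z, (((Finset.univ.filter (fun i => Z i ∈ Ωm)).card).descFactorial k : ℝ≥0∞) ∂μ
      = (N.descFactorial k : ℝ≥0∞) * marg N k μ hk (Set.univ.pi fun _ : Fin k => Ωm) := by
  have hsets : ∀ f : Fin k ↪ Fin N, MeasurableSet {Z : Fin N → E4 | ∀ j, Z (f j) ∈ Ωm} := by
    intro f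
    have : {Z : Fin N → E4 | ∀ j, Z (f j) ∈ Ωm}
        = ⋂ j, (fun Z : Fin N → E4 => Z (f j)) ⁻¹' Ωm := by ext Z; simp
    rw [this]; exact MeasurableSet.iInter fun j => (measurable_pi_apply _) hΩm
  calc ∫⁻ Z, (((Finset.univ.filter (fun i => Z i ∈ Ωm)).card).descFactorial k : ℝ≥0∞) ∂μ
      = ∫⁻ Z, ∑ f : Fin k ↪ Fin N,
          Set.indicator {Z : Fin N → E4 | ∀ j, Z (f j) ∈ Ωm}
            (1 : (Fin N → E4) → ℝ≥0∞) Z ∂μ := by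
        refine lintegral_congr fun Z => ?_
        rw [descFactorial_card_eq_aux N k Z Ωm, Nat.cast_sum]
        refine Finset.sum_congr rfl fun f _ => ?_
        by_cases h : ∀ j, Z (f j) ∈ Ωm <;> simp [Set.indicator_apply, h]
    _ = ∑ f : Fin k ↪ Fin N,
          ∫⁻ Z, Set.indicator {Z : Fin N → E4 | ∀ j, Z (f j) ∈ Ωm}
            (1 : (Fin N → E4) → ℝ≥0∞) Z ∂μ := by
        refine lintegral_finset_sum _ fun f _ => ?_
        exact (measurable_const).indicator (hsets f)
    _ = ∑ f : Fin k ↪ Fin N, μ {Z : Fin N → E4 | ∀ j, Z (f j) ∈ Ωm} := by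
        refine Finset.sum_congr rfl fun f _ => ?_
        rw [lintegral_indicator_one (hsets f)]
    _ = ∑ _f : Fin k ↪ Fin N, μ {Z : Fin N → E4 | ∀ j, Z (Fin.castLE hk j) ∈ Ωm} := by
        exact Finset.sum_congr rfl fun f _ => symm_cylinder_aux hk μ hsym Ωm hΩm f
    _ = (N.descFactorial k : ℝ≥0∞) * μ {Z : Fin N → E4 | ∀ j, Z (Fin.castLE hk j) ∈ Ωm} := by
        rw [Finset.sum_const, nsmul_eq_mul]
        congr 2
        rw [Finset.card_univ, Fintype.card_embedding_eq, Fintype.card_fin, Fintype.card_fin]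
    _ = _ := by rw [marg_box_aux hk μ Ωm hΩm]

lemma moment_real_calc_aux (N k : ℕ) (hN : 1 ≤ N) (hkN : k ≤ N) (β : ℝ) :
    (N.descFactorial k : ℝ) *
      ((((2 * π * (N : ℝ) ^ (-(1 : ℝ) / 2)) ^ (2 * k) * (N.descFactorial k : ℝ))⁻¹)
        * ((N : ℝ) ^ (-β)) ^ k)
      = ((N : ℝ) ^ (1 - β) / (2 * π) ^ 2) ^ k := by
  have hNpos : (0:ℝ) < N := by exact_mod_cast Nat.pos_of_ne_zero (by omega)
  have hd : (N.descFactorial k : ℝ) ≠ 0 := by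
    have : N.descFactorial k ≠ 0 := by
      simp [Nat.descFactorial_eq_zero_iff_lt, Nat.not_lt.mpr hkN]
    exact_mod_cast this
  have h1 : (2 * π * (N : ℝ) ^ (-(1:ℝ)/2)) ^ (2*k)
      = (2*π)^(2*k) * ((N:ℝ)^(-(1:ℝ)/2))^(2*k) := mul_pow _ _ _
  have h2 : ((N:ℝ)^(-(1:ℝ)/2))^(2*k) = ((N:ℝ)^((k:ℝ)))⁻¹ := by
    rw [← Real.rpow_natCast ((N:ℝ)^(-(1:ℝ)/2)) (2*k), ← Real.rpow_mul hNpos.le,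
      ← Real.rpow_neg_one ((N:ℝ)^((k:ℝ))), ← Real.rpow_mul hNpos.le]
    congr 1; push_cast; ring
  have h3 : ((N:ℝ)^(-β))^k = (N:ℝ)^(-β*(k:ℝ)) := by
    rw [← Real.rpow_natCast ((N:ℝ)^(-β)) k, ← Real.rpow_mul hNpos.le]
  have h4 : ((N : ℝ) ^ (1 - β) / (2 * π) ^ 2) ^ k
      = (N:ℝ)^((1-β)*(k:ℝ)) / ((2*π)^(2*k)) := by
    rw [div_pow, ← pow_mul, ← Real.rpow_natCast ((N:ℝ)^(1-β)) k, ← Real.rpow_mul hNpos.le,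
      mul_comm 2 k]
  have h5 : (N:ℝ)^((1-β)*(k:ℝ)) = (N:ℝ)^((k:ℝ)) * (N:ℝ)^(-β*(k:ℝ)) := by
    rw [← Real.rpow_add hNpos]; congr 1; ring
  have hP : ((2:ℝ)*π)^(2*k) ≠ 0 := by positivity
  have hQ : (N:ℝ)^((k:ℝ)) ≠ 0 := by positivity
  rw [h1, h2, h3, h4, h5]
  field_simp

lemma box_volume_aux (k : ℕ) (Ωm : Set E4) (v : ℝ≥0∞) (hvol : volume Ωm = v) :
    volume (Set.univ.pi fun _ : Fin k => Ωm) = v ^ k := by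
  rw [volume_pi_pi]
  simp [hvol]

lemma tail_bound_aux (ε m x : ℝ) (k : ℕ) (hε : 0 < ε) (hx : 0 < x) (hxk : x ≤ k)
    (hkm : 2*(k:ℝ) ≤ m) (hksq : (k:ℝ)^2 ≤ 4*(2*π)^2*m) :
    m^k / ((1+ε)*m - (k:ℝ))^k ≤ exp (8*(2*π)^2) * exp (-(1:ℝ) * x * log (1+ε)) := by
  have hk_pos : 0 < (k:ℝ) := hx.trans_le hxk
  have hm_pos : 0 < m := by linarith
  have hmk_pos : 0 < m - k := by linarith
  have h1ε : (0:ℝ) < 1 + ε := by linarith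
  have hq' : (1+ε)*(m-k) ≤ (1+ε)*m - k := by nlinarith
  have hq'_pos : 0 < (1+ε)*(m-k) := by positivity
  have hq_pos : 0 < (1+ε)*m - (k:ℝ) := lt_of_lt_of_le hq'_pos hq'
  have hlog : 0 < log (1+ε) := Real.log_pos (by linarith)
  have hstep1 : m^k / ((1+ε)*m - (k:ℝ))^k ≤ ((1/(1+ε)) * (m/(m-k)))^k := by
    rw [← div_pow]
    refine pow_le_pow_left₀ (by positivity) ?_ k
    have : m / ((1+ε)*m - (k:ℝ)) ≤ m / ((1+ε)*(m-k)) :=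
      div_le_div_of_nonneg_left hm_pos.le hq'_pos hq'
    calc m / ((1+ε)*m - (k:ℝ)) ≤ m / ((1+ε)*(m-k)) := this
      _ = (1/(1+ε)) * (m/(m-k)) := by field_simp
  have hstep2 : m/(m-k) ≤ exp ((k:ℝ)/(m-k)) := by
    have h := Real.add_one_le_exp ((k:ℝ)/(m-k))
    have : m/(m-k) = (k:ℝ)/(m-k) + 1 := by field_simp; ring
    rw [this]; exact h
  have hstep3 : ((1/(1+ε)) * (m/(m-k)))^k
      ≤ exp (-(k:ℝ) * log (1+ε)) * exp ((k:ℝ)^2/(m-k)) := by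
    rw [mul_pow]
    refine mul_le_mul ?_ ?_ (by positivity) (by positivity)
    · have hpow : (1+ε)^(k:ℕ) = exp ((k:ℝ) * log (1+ε)) := by
        rw [← Real.rpow_natCast (1+ε) k, Real.rpow_def_of_pos h1ε, mul_comm]
      have h1 : ((1:ℝ)/(1+ε))^k = exp (-(k:ℝ) * log (1+ε)) := by
        rw [one_div, inv_pow, hpow, ← Real.exp_neg]
        congr 1; ring
      rw [h1]
    · calc (m/(m-k))^k ≤ (exp ((k:ℝ)/(m-k)))^k :=
          pow_le_pow_left₀ (by positivity) hstep2 k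
        _ = exp ((k:ℝ)^2/(m-k)) := by
          rw [← Real.exp_nat_mul]; congr 1; field_simp
  have hexp1 : exp (-(k:ℝ) * log (1+ε)) ≤ exp (-(1:ℝ) * x * log (1+ε)) := by
    apply Real.exp_le_exp.mpr
    nlinarith
  have hexp2 : exp ((k:ℝ)^2/(m-k)) ≤ exp (8*(2*π)^2) := by
    apply Real.exp_le_exp.mpr
    rw [div_le_iff₀ hmk_pos]
    nlinarith
  calc m^k / ((1+ε)*m - (k:ℝ))^k ≤ ((1/(1+ε)) * (m/(m-k)))^k := hstep1
    _ ≤ exp (-(k:ℝ) * log (1+ε)) * exp ((k:ℝ)^2/(m-k)) := hstep3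
    _ ≤ exp (-(1:ℝ) * x * log (1+ε)) * exp (8*(2*π)^2) := by
        exact mul_le_mul hexp1 hexp2 (by positivity) (by positivity)
    _ = exp (8*(2*π)^2) * exp (-(1:ℝ) * x * log (1+ε)) := by ring

set_option maxHeartbeats 2000000 in
/-- **probability of violating the Pauli principle in a phase-space box.**
`P^DF_N` is the pushforward of `μ_N` under `Z ↦ Emp_Z`; the probability that the empirical
measure overfills a box `Ω_m` of volume `N^{-β}` is exponentially small. -/
theorem pauli_violation_probability (β δ : ℝ) (hβ0 : 0 < β) (hβ1 : β < 1)
    (hδ0 : 0 < δ) (hδ : δ < (1 - β) / 2) :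
    ∃ C > (0 : ℝ), ∃ c > (0 : ℝ),
      ∀ (N : ℕ), 1 ≤ N →
      ∀ (μ : Measure (Fin N → E4)), IsProbabilityMeasure μ → IsSymmetricMeasure μ →
      -- the semiclassical Pauli principle for the marginals of `μ`, with `ħ² = 1/N`
      (∀ (k : ℕ) (hk1 : 1 ≤ k) (hkN : k ≤ N), ∀ A : Set (Fin k → E4),
        MeasurableSet A →
        marg N k μ hkN A
          ≤ ENNReal.ofReal
              (((2 * π * (N : ℝ) ^ (-(1 : ℝ) / 2)) ^ (2 * k) * (N.descFactorial k : ℝ))⁻¹)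
              * volume A) →
      ∀ (Ωm : Set E4), MeasurableSet Ωm → volume Ωm = ENNReal.ofReal ((N : ℝ) ^ (-β)) →
      ∀ ε > (0 : ℝ),
        μ {Z : Fin N → E4 |
            ENNReal.ofReal ((1 + ε) / (2 * π) ^ 2 * (N : ℝ) ^ (-β)) ≤ emp N Z Ωm}
          ≤ ENNReal.ofReal (C * Real.exp (-c * (N : ℝ) ^ δ * Real.log (1 + ε))) := by
  classical
  -- threshold for the "large N" regime
  have htend : Tendsto (fun n : ℕ => ((n:ℝ))^(1-β-δ)) atTop atTop :=
    (tendsto_rpow_atTop (by linarith)).comp tendsto_natCast_atTop_atTop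
  obtain ⟨N₀, hN₀⟩ := Filter.eventually_atTop.mp (htend.eventually_ge_atTop (4*(2*π)^2))
  set N₁ : ℕ := max N₀ 1 with hN₁def
  have hN₁1 : 1 ≤ N₁ := le_max_right _ _
  have hN₁ : ∀ N : ℕ, N₁ ≤ N → 4*(2*π)^2 ≤ ((N:ℝ))^(1-β-δ) :=
    fun N hN => hN₀ N ((le_max_left _ _).trans hN)
  set C : ℝ := max (exp ((N₁:ℝ)^δ * log ((2*π)^2 * (N₁:ℝ)^β))) (exp (8*(2*π)^2)) with hCdef
  have hCpos : 0 < C := lt_of_lt_of_le (Real.exp_pos _) (le_max_right _ _)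
  refine ⟨C, hCpos, 1, one_pos, ?_⟩
  intro N hN1 μ hprob hsym hPauli Ωm hΩm hvol ε hε
  haveI := hprob
  have hNpos : (0:ℝ) < N := by exact_mod_cast Nat.pos_of_ne_zero (by omega)
  have hN1R : (1:ℝ) ≤ N := by exact_mod_cast hN1
  have hπ : (0:ℝ) < π := Real.pi_pos
  have h1ε : (0:ℝ) < 1 + ε := by linarith
  have hlogε : 0 < log (1+ε) := Real.log_pos (by linarith)
  by_cases hbig : N₁ ≤ N
  case neg =>
    -- small N : either the event is empty, or we absorb everything in C
    by_cases ht1 : (1 + ε) / (2 * π) ^ 2 * (N : ℝ) ^ (-β) ≤ 1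
    · -- bound the probability by 1 and use the definition of C
      have hNβpos : (0:ℝ) < (N:ℝ)^β := Real.rpow_pos_of_pos hNpos β
      have hid : (1+ε) = ((1+ε)/(2*π)^2*(N:ℝ)^(-β)) * ((2*π)^2 * (N:ℝ)^β) := by
        rw [Real.rpow_neg hNpos.le]; field_simp
      have hεbound : 1 + ε ≤ (2*π)^2 * (N:ℝ)^β := by
        calc 1 + ε = ((1+ε)/(2*π)^2*(N:ℝ)^(-β)) * ((2*π)^2 * (N:ℝ)^β) := hid
          _ ≤ 1 * ((2*π)^2 * (N:ℝ)^β) := by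
              refine mul_le_mul_of_nonneg_right ht1 (by positivity)
          _ = (2*π)^2 * (N:ℝ)^β := one_mul _
      have hNN₁R : (N:ℝ) ≤ (N₁:ℝ) := by exact_mod_cast (Nat.not_le.mp hbig).le
      have hlog1 : log (1+ε) ≤ log ((2*π)^2 * (N₁:ℝ)^β) := by
        refine Real.log_le_log h1ε (hεbound.trans ?_)
        have : (N:ℝ)^β ≤ (N₁:ℝ)^β := Real.rpow_le_rpow hNpos.le hNN₁R hβ0.le
        nlinarith [sq_nonneg (2*π)]
      have hlogC0 : 0 ≤ log ((2*π)^2 * (N₁:ℝ)^β) := le_trans hlogε.le hlog1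
      have hNδle : (N:ℝ)^δ ≤ (N₁:ℝ)^δ := Real.rpow_le_rpow hNpos.le hNN₁R hδ0.le
      have hNδ0 : (0:ℝ) ≤ (N:ℝ)^δ := (Real.rpow_pos_of_pos hNpos δ).le
      have hmul : (N:ℝ)^δ * log (1+ε) ≤ (N₁:ℝ)^δ * log ((2*π)^2 * (N₁:ℝ)^β) :=
        mul_le_mul hNδle hlog1 hlogε.le (hNδ0.trans hNδle)
      have hCge : exp ((N:ℝ)^δ * log (1+ε)) ≤ C :=
        le_trans (Real.exp_le_exp.mpr hmul) (le_max_left _ _)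
      have hone : (1:ℝ) ≤ C * exp (-(1:ℝ) * (N:ℝ)^δ * log (1+ε)) := by
        have hid2 : exp ((N:ℝ)^δ * log (1+ε)) * exp (-(1:ℝ) * (N:ℝ)^δ * log (1+ε)) = 1 := by
          rw [← Real.exp_add]
          have : (N:ℝ)^δ * log (1+ε) + -(1:ℝ) * (N:ℝ)^δ * log (1+ε) = 0 := by ring
          rw [this, Real.exp_zero]
        calc (1:ℝ) = exp ((N:ℝ)^δ * log (1+ε)) * exp (-(1:ℝ) * (N:ℝ)^δ * log (1+ε)) :=
              hid2.symm
          _ ≤ C * exp (-(1:ℝ) * (N:ℝ)^δ * log (1+ε)) :=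
              mul_le_mul_of_nonneg_right hCge (Real.exp_pos _).le
      calc μ {Z : Fin N → E4 |
            ENNReal.ofReal ((1 + ε) / (2 * π) ^ 2 * (N : ℝ) ^ (-β)) ≤ emp N Z Ωm}
          ≤ 1 := prob_le_one
        _ = ENNReal.ofReal 1 := ENNReal.ofReal_one.symm
        _ ≤ _ := ENNReal.ofReal_le_ofReal hone
    · -- event is empty since `emp` is a probability measure
      push_neg at ht1
      have hempty : {Z : Fin N → E4 |
          ENNReal.ofReal ((1 + ε) / (2 * π) ^ 2 * (N : ℝ) ^ (-β)) ≤ emp N Z Ωm} = ∅ := by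
        rw [Set.eq_empty_iff_forall_notMem]
        intro Z hZ
        have hle : emp N Z Ωm ≤ emp N Z Set.univ := measure_mono (Set.subset_univ _)
        have huniv : emp N Z Set.univ = 1 := by
          simp only [emp, Measure.smul_apply, Measure.finset_sum_apply, measure_univ,
            smul_eq_mul, Finset.sum_const, Finset.card_univ, Fintype.card_fin, nsmul_eq_mul,
            mul_one]
          exact ENNReal.inv_mul_cancel (by exact_mod_cast Nat.cast_ne_zero.mpr (by omega))
            (ENNReal.natCast_ne_top N)
        have : ENNReal.ofReal ((1 + ε) / (2 * π) ^ 2 * (N : ℝ) ^ (-β)) ≤ 1 := by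
          calc ENNReal.ofReal ((1 + ε) / (2 * π) ^ 2 * (N : ℝ) ^ (-β))
              ≤ emp N Z Ωm := hZ
            _ ≤ emp N Z Set.univ := hle
            _ = 1 := huniv
        exact absurd (ENNReal.ofReal_le_one.mp this) (not_le.mpr ht1)
      rw [hempty]
      simp
  case pos =>
    -- large N : Chernoff-type bound via the k-th descending factorial moment
    set X : (Fin N → E4) → ℕ :=
      fun Z => (Finset.univ.filter (fun i => Z i ∈ Ωm)).card with hXdef
    set m : ℝ := (N:ℝ)^(1-β) / (2*π)^2 with hmdef
    have hm_pos : 0 < m := by positivity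
    set k : ℕ := ⌈(N:ℝ)^δ⌉₊ with hkdef
    set a : ℕ := ⌈(1+ε)*m⌉₊ with hadef
    have hδ1 : δ ≤ 1 := by linarith
    have hNδpos : (0:ℝ) < (N:ℝ)^δ := Real.rpow_pos_of_pos hNpos δ
    have hNδ1 : (1:ℝ) ≤ (N:ℝ)^δ := Real.one_le_rpow hN1R hδ0.le
    have hk1 : 1 ≤ k := Nat.ceil_pos.mpr hNδpos
    have hkN : k ≤ N := by
      refine Nat.ceil_le.mpr ?_
      calc (N:ℝ)^δ ≤ (N:ℝ)^(1:ℝ) := Real.rpow_le_rpow_of_exponent_le hN1R hδ1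
        _ = N := Real.rpow_one _
    have hxk : (N:ℝ)^δ ≤ k := Nat.le_ceil _
    have hk2 : (k:ℝ) ≤ 2*(N:ℝ)^δ := by
      have := Nat.ceil_lt_add_one hNδpos.le
      linarith
    -- m dominates k
    have hsplit : (N:ℝ)^(1-β) = (N:ℝ)^(1-β-δ) * (N:ℝ)^δ := by
      rw [← Real.rpow_add hNpos]; congr 1; ring
    have hm4 : 4*(N:ℝ)^δ ≤ m := by
      have h2 := hN₁ N hbig
      calc 4*(N:ℝ)^δ = (4*(2*π)^2) * (N:ℝ)^δ / (2*π)^2 := by field_simp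
        _ ≤ (N:ℝ)^(1-β-δ) * (N:ℝ)^δ / (2*π)^2 := by gcongr
        _ = m := by rw [hmdef, hsplit]
    have hkm : 2*(k:ℝ) ≤ m := by linarith
    have hksq : (k:ℝ)^2 ≤ 4*(2*π)^2*m := by
      have h2δ : δ + δ ≤ 1 - β := by linarith
      have hsq : (N:ℝ)^δ * (N:ℝ)^δ ≤ (2*π)^2 * m := by
        rw [← Real.rpow_add hNpos]
        have h1 : (N:ℝ)^(δ+δ) ≤ (N:ℝ)^(1-β) :=
          Real.rpow_le_rpow_of_exponent_le hN1R h2δ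
        have h2 : (N:ℝ)^(1-β) = (2*π)^2 * m := by rw [hmdef]; field_simp
        linarith
      nlinarith [hk2, hNδpos.le]
    have hq_pos : 0 < (1+ε)*m - (k:ℝ) := by nlinarith [mul_pos hε hm_pos]
    -- the event in terms of the particle count X
    have hevent : {Z : Fin N → E4 |
        ENNReal.ofReal ((1 + ε) / (2 * π) ^ 2 * (N : ℝ) ^ (-β)) ≤ emp N Z Ωm}
        = {Z : Fin N → E4 | a ≤ X Z} := by
      have hNb : (N:ℝ)^(-β) * (N:ℝ) = (N:ℝ)^(1-β) := by
        rw [show (1-β) = -β + 1 by ring, Real.rpow_add hNpos, Real.rpow_one]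
      have htm : ((1 + ε) / (2 * π) ^ 2 * (N : ℝ) ^ (-β)) * N = (1+ε) * m := by
        rw [mul_assoc, hNb, hmdef]; ring
      have ht0 : 0 ≤ (1 + ε) / (2 * π) ^ 2 * (N : ℝ) ^ (-β) := by positivity
      ext Z
      rw [Set.mem_setOf_eq, Set.mem_setOf_eq, emp_apply_aux N Z Ωm hΩm]
      rw [ENNReal.le_div_iff_mul_le
        (Or.inl (by exact_mod_cast Nat.cast_ne_zero.mpr (show N ≠ 0 by omega)))
        (Or.inl (ENNReal.natCast_ne_top N))]
      rw [show ((N:ℝ≥0∞)) = ENNReal.ofReal ((N:ℝ)) from (ENNReal.ofReal_natCast N).symm,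
        ← ENNReal.ofReal_mul ht0, htm,
        show ((X Z : ℝ≥0∞)) = ENNReal.ofReal ((X Z : ℝ)) from (ENNReal.ofReal_natCast _).symm,
        ENNReal.ofReal_le_ofReal_iff (by positivity)]
      exact ⟨fun h => Nat.ceil_le.mpr h, fun h => Nat.ceil_le.mp h⟩
    -- measurability
    have hXmeas : Measurable X := by
      have hXeq : X = fun Z => ∑ i : Fin N, if Z i ∈ Ωm then 1 else 0 :=
        funext fun Z => Finset.card_filter _ _
      rw [hXeq]
      exact Finset.measurable_sum _ fun i _ =>
        Measurable.ite ((measurable_pi_apply i) hΩm) measurable_const measurable_const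
    have hSmeas : MeasurableSet {Z : Fin N → E4 | a ≤ X Z} :=
      hXmeas (MeasurableSet.of_discrete (s := {n : ℕ | a ≤ n}))
    have hdesc_meas : Measurable fun Z => (((X Z).descFactorial k : ℕ) : ℝ≥0∞) :=
      (Measurable.of_discrete (f := fun n : ℕ => ((n.descFactorial k : ℕ) : ℝ≥0∞))).comp hXmeas
    -- Markov inequality with the k-th descending factorial moment
    have markov : μ {Z : Fin N → E4 | a ≤ X Z} * ((a.descFactorial k : ℕ) : ℝ≥0∞)
        ≤ ∫⁻ Z, (((X Z).descFactorial k : ℕ) : ℝ≥0∞) ∂μ := by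
      calc μ {Z : Fin N → E4 | a ≤ X Z} * ((a.descFactorial k : ℕ) : ℝ≥0∞)
          = ∫⁻ _ in {Z : Fin N → E4 | a ≤ X Z}, ((a.descFactorial k : ℕ) : ℝ≥0∞) ∂μ := by
            rw [setLIntegral_const, mul_comm]
        _ ≤ ∫⁻ Z in {Z : Fin N → E4 | a ≤ X Z}, (((X Z).descFactorial k : ℕ) : ℝ≥0∞) ∂μ := by
            refine setLIntegral_mono hdesc_meas fun Z hZ => ?_
            exact_mod_cast Nat.cast_le.mpr (Nat.descFactorial_le k hZ)
        _ ≤ _ := setLIntegral_le_lintegral _ _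
    -- the moment bound from the Pauli principle
    have hBmeas : MeasurableSet (Set.univ.pi fun _ : Fin k => Ωm) :=
      MeasurableSet.univ_pi fun _ => hΩm
    have hBvol : volume (Set.univ.pi fun _ : Fin k => Ωm)
        = ENNReal.ofReal (((N:ℝ)^(-β))^k) := by
      rw [box_volume_aux k Ωm _ hvol, ← ENNReal.ofReal_pow (by positivity)]
    have hbinv0 : 0 ≤ (((2 * π * (N : ℝ) ^ (-(1 : ℝ) / 2)) ^ (2 * k)
        * (N.descFactorial k : ℝ))⁻¹) := by positivity
    have hint : ∫⁻ Z, (((X Z).descFactorial k : ℕ) : ℝ≥0∞) ∂μ ≤ ENNReal.ofReal (m^k) := by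
      have hmom := moment_identity_aux hkN μ hsym Ωm hΩm
      have hmarg := hPauli k hk1 hkN (Set.univ.pi fun _ : Fin k => Ωm) hBmeas
      calc ∫⁻ Z, (((X Z).descFactorial k : ℕ) : ℝ≥0∞) ∂μ
          = (N.descFactorial k : ℝ≥0∞) * marg N k μ hkN (Set.univ.pi fun _ : Fin k => Ωm) :=
            hmom
        _ ≤ (N.descFactorial k : ℝ≥0∞) *
            (ENNReal.ofReal
              (((2 * π * (N : ℝ) ^ (-(1 : ℝ) / 2)) ^ (2 * k) * (N.descFactorial k : ℝ))⁻¹)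
              * ENNReal.ofReal (((N:ℝ)^(-β))^k)) := by
            refine mul_le_mul_right ?_ _
            rw [← hBvol]
            exact hmarg
        _ = ENNReal.ofReal ((N.descFactorial k : ℝ) *
            ((((2 * π * (N : ℝ) ^ (-(1 : ℝ) / 2)) ^ (2 * k) * (N.descFactorial k : ℝ))⁻¹)
              * ((N:ℝ)^(-β))^k)) := by
            rw [← ENNReal.ofReal_mul hbinv0, ← ENNReal.ofReal_natCast (N.descFactorial k),
              ← ENNReal.ofReal_mul (by positivity)]
        _ = ENNReal.ofReal (m^k) := by
            rw [moment_real_calc_aux N k hN1 hkN β, hmdef]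
    -- lower bound for the descending factorial of a
    have ham : (1+ε)*m ≤ (a:ℝ) := Nat.le_ceil _
    have hak : k ≤ a := by
      have : (k:ℝ) ≤ (a:ℝ) := by nlinarith [mul_pos hε hm_pos]
      exact_mod_cast this
    have hqa : (1+ε)*m - (k:ℝ) ≤ ((a - k : ℕ):ℝ) := by
      rw [Nat.cast_sub hak]; linarith
    have hd_a : ENNReal.ofReal (((1+ε)*m - (k:ℝ))^k) ≤ ((a.descFactorial k : ℕ) : ℝ≥0∞) := by
      have h1 : ((1+ε)*m - (k:ℝ))^k ≤ (((a-k:ℕ)^k : ℕ):ℝ) := by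
        push_cast
        exact pow_le_pow_left₀ hq_pos.le hqa k
      have h2 : (a-k:ℕ)^k ≤ a.descFactorial k :=
        le_trans (Nat.pow_le_pow_left (by omega) k) (Nat.pow_sub_le_descFactorial a k)
      calc ENNReal.ofReal (((1+ε)*m - (k:ℝ))^k)
          ≤ ENNReal.ofReal ((((a-k:ℕ)^k : ℕ):ℝ)) := ENNReal.ofReal_le_ofReal h1
        _ = (((a-k:ℕ)^k : ℕ) : ℝ≥0∞) := ENNReal.ofReal_natCast _
        _ ≤ _ := by exact_mod_cast Nat.cast_le.mpr h2
    have hd_ne0 : ((a.descFactorial k : ℕ) : ℝ≥0∞) ≠ 0 := by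
      have : a.descFactorial k ≠ 0 := fun h =>
        absurd (Nat.descFactorial_eq_zero_iff_lt.mp h) (Nat.not_lt.mpr hak)
      exact_mod_cast Nat.cast_ne_zero.mpr this
    -- put everything together
    have hμ1 : μ {Z : Fin N → E4 | a ≤ X Z}
        ≤ ENNReal.ofReal (m^k) / ((a.descFactorial k : ℕ) : ℝ≥0∞) :=
      (ENNReal.le_div_iff_mul_le (Or.inl hd_ne0)
        (Or.inl (ENNReal.natCast_ne_top _))).mpr (markov.trans hint)
    have hμ2 : μ {Z : Fin N → E4 | a ≤ X Z}
        ≤ ENNReal.ofReal (m^k / ((1+ε)*m - (k:ℝ))^k) := by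
      calc μ {Z : Fin N → E4 | a ≤ X Z}
          ≤ ENNReal.ofReal (m^k) / ((a.descFactorial k : ℕ) : ℝ≥0∞) := hμ1
        _ ≤ ENNReal.ofReal (m^k) / ENNReal.ofReal (((1+ε)*m - (k:ℝ))^k) :=
            ENNReal.div_le_div le_rfl hd_a
        _ = ENNReal.ofReal (m^k / ((1+ε)*m - (k:ℝ))^k) :=
            (ENNReal.ofReal_div_of_pos (pow_pos hq_pos k)).symm
    have htail := tail_bound_aux ε m ((N:ℝ)^δ) k hε hNδpos hxk hkm hksq
    have hfinal : m^k / ((1+ε)*m - (k:ℝ))^k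
        ≤ C * exp (-(1:ℝ) * (N:ℝ)^δ * log (1+ε)) := by
      calc m^k / ((1+ε)*m - (k:ℝ))^k
          ≤ exp (8*(2*π)^2) * exp (-(1:ℝ) * (N:ℝ)^δ * log (1+ε)) := htail
        _ ≤ C * exp (-(1:ℝ) * (N:ℝ)^δ * log (1+ε)) :=
            mul_le_mul_of_nonneg_right (le_max_right _ _) (Real.exp_pos _).le
    rw [hevent]
    exact hμ2.trans (ENNReal.ofReal_le_ofReal hfinal)

end
end
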